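/- arXiv:1206.0664 — 7 statements merged into one kernel-verified Lean document; each statement's English description precedes it below -/
import Mathlib

section
/- Let α > 0 and β ∈ ℝ. For every s ∈ ℂ the family of complex numbers (1 − e^{i(k₁−k₂)β} e^{−(k₁+k₂+s)α}) indexed by pairs (k₁,k₂) ∈ ℕ×ℕ is multipliable (the infinite product converges absolutely), and the resulting function Z_Γ(s) = ∏_{k₁,k₂ ≥ 0} (1 − e^{i(k₁−k₂)β} e^{−(k₁+k₂+s)α}) is holomorphic on all of ℂ (an entire function). -/
open Complex Metric Finset

noncomputable def PSfac (α β : ℝ) (k : ℕ × ℕ) (s : ℂ) : ℂ :=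
  1 - Complex.exp (Complex.I * ((k.1 : ℂ) - (k.2 : ℂ)) * (β : ℂ)) *
      Complex.exp (-(((k.1 : ℂ) + (k.2 : ℂ) + s) * (α : ℂ)))

lemma PSfac_sub_one_norm (α β : ℝ) (k : ℕ × ℕ) (s : ℂ) :
    ‖PSfac α β k s - 1‖ =
      Real.exp (-s.re * α) * (Real.exp (-α) ^ k.1 * Real.exp (-α) ^ k.2) := by
  have h1 : PSfac α β k s - 1 =
      -Complex.exp (Complex.I * ((k.1 : ℂ) - (k.2 : ℂ)) * (β : ℂ) +
        -(((k.1 : ℂ) + (k.2 : ℂ) + s) * (α : ℂ))) := by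
    rw [Complex.exp_add]; unfold PSfac; ring
  rw [h1, norm_neg, Complex.norm_exp]
  rw [← Real.exp_nat_mul, ← Real.exp_nat_mul, ← Real.exp_add, ← Real.exp_add]
  congr 1
  simp [Complex.add_re, Complex.mul_re, Complex.mul_im]
  ring

lemma PSfac_diff (α β : ℝ) (k : ℕ × ℕ) : Differentiable ℂ (fun s => PSfac α β k s) := by
  unfold PSfac
  fun_prop

lemma PS_key (α : ℝ) (hα : 0 < α) (β : ℝ) (R : ℝ) :
    (∀ s ∈ ball (0:ℂ) R, Multipliable fun k : ℕ × ℕ => PSfac α β k s) ∧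
    DifferentiableOn ℂ (fun s => ∏' k : ℕ × ℕ, PSfac α β k s) (ball (0:ℂ) R) := by
  set r : ℝ := Real.exp (-α) with hr
  have hr0 : 0 ≤ r := Real.exp_nonneg _
  have hr1 : r < 1 := Real.exp_lt_one_iff.mpr (by linarith)
  -- choose N so tail factors are small
  have htend : Filter.Tendsto (fun n : ℕ => Real.exp (R * α) * r ^ n)
      Filter.atTop (nhds 0) := by
    simpa using (tendsto_pow_atTop_nhds_zero_of_lt_one hr0 hr1).const_mul (Real.exp (R * α))
  obtain ⟨N, hN⟩ := (htend.eventually (ge_mem_nhds (by norm_num : (0:ℝ) < 1/2))).exists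
  -- the finite "bad" set
  set T : Finset (ℕ × ℕ) :=
    (Finset.range N ×ˢ Finset.range N).filter (fun k => k.1 + k.2 < N) with hT
  have hmemT : ∀ k : ℕ × ℕ, k ∈ T ↔ k.1 + k.2 < N := by
    intro k
    simp only [hT, Finset.mem_filter, Finset.mem_product, Finset.mem_range]
    omega
  -- uniform bound on the ball
  have hb : ∀ (k : ℕ × ℕ), ∀ s ∈ ball (0:ℂ) R,
      ‖PSfac α β k s - 1‖ ≤ Real.exp (R * α) * (r ^ k.1 * r ^ k.2) := by
    intro k s hs
    rw [PSfac_sub_one_norm]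
    have hsre : -s.re ≤ R := by
      have h1 : |s.re| ≤ ‖s‖ := Complex.abs_re_le_norm s
      have h2 : ‖s‖ < R := by simpa [mem_ball, dist_zero_right] using hs
      cases abs_le.mp h1 with
      | intro hl hu => linarith
    have : Real.exp (-s.re * α) ≤ Real.exp (R * α) :=
      Real.exp_le_exp.mpr (by nlinarith)
    exact mul_le_mul_of_nonneg_right this (by positivity)
  have hsmall : ∀ k : ℕ × ℕ, k ∉ T → ∀ s ∈ ball (0:ℂ) R,
      ‖PSfac α β k s - 1‖ ≤ 1/2 := by
    intro k hk s hs
    have hkN : N ≤ k.1 + k.2 := by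
      by_contra h; exact hk ((hmemT k).mpr (by omega))
    have h1 : r ^ k.1 * r ^ k.2 ≤ r ^ N := by
      rw [← pow_add]
      exact pow_le_pow_of_le_one hr0 hr1.le hkN
    calc ‖PSfac α β k s - 1‖ ≤ Real.exp (R * α) * (r ^ k.1 * r ^ k.2) := hb k s hs
      _ ≤ Real.exp (R * α) * r ^ N :=
          mul_le_mul_of_nonneg_left h1 (Real.exp_nonneg _)
      _ ≤ 1/2 := hN
  have hne : ∀ k : ℕ × ℕ, k ∉ T → ∀ s ∈ ball (0:ℂ) R, PSfac α β k s ≠ 0 := by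
    intro k hk s hs h0
    have := hsmall k hk s hs
    rw [h0] at this
    norm_num at this
  have hslit : ∀ k : ℕ × ℕ, k ∉ T → ∀ s ∈ ball (0:ℂ) R,
      PSfac α β k s ∈ Complex.slitPlane := by
    intro k hk s hs
    have h1 := hsmall k hk s hs
    have h2 : |(PSfac α β k s - 1).re| ≤ ‖PSfac α β k s - 1‖ :=
      Complex.abs_re_le_norm _
    left
    have : (PSfac α β k s - 1).re = (PSfac α β k s).re - 1 := by simp
    rw [this] at h2
    cases abs_le.mp h2 with
    | intro hl hu => linarith
  -- the summable bound for the logs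
  set u : ℕ × ℕ → ℝ := fun k => 3/2 * (Real.exp (R * α) * (r ^ k.1 * r ^ k.2)) with hu
  have hus : Summable u := by
    apply Summable.mul_left
    apply Summable.mul_left
    exact (summable_geometric_of_lt_one hr0 hr1).mul_of_nonneg
      (summable_geometric_of_lt_one hr0 hr1) (fun _ => pow_nonneg hr0 _)
      (fun _ => pow_nonneg hr0 _)
  have hlogb : ∀ k : ℕ × ℕ, k ∉ T → ∀ s ∈ ball (0:ℂ) R,
      ‖Complex.log (PSfac α β k s)‖ ≤ u k := by
    intro k hk s hs
    have h1 : PSfac α β k s = 1 + (PSfac α β k s - 1) := by ring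
    rw [h1]
    calc ‖Complex.log (1 + (PSfac α β k s - 1))‖
        ≤ 3/2 * ‖PSfac α β k s - 1‖ :=
          Complex.norm_log_one_add_half_le_self (hsmall k hk s hs)
      _ ≤ u k := by
          have := hb k s hs
          rw [hu]
          nlinarith [norm_nonneg (PSfac α β k s - 1)]
  -- summability of the logs on the complement
  have hsumlog : ∀ s ∈ ball (0:ℂ) R,
      Summable (fun k : ↑((T : Set (ℕ × ℕ))ᶜ) => Complex.log (PSfac α β (k : ℕ × ℕ) s)) := by
    intro s hs
    apply Summable.of_norm_bounded (g := fun k : ↑((T : Set (ℕ × ℕ))ᶜ) => u k) (hus.subtype _)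
    intro k
    exact hlogb k k.2 s hs
  -- HasProd on the complement
  have hprodc : ∀ s ∈ ball (0:ℂ) R,
      HasProd (fun k : ↑((T : Set (ℕ × ℕ))ᶜ) => PSfac α β (k : ℕ × ℕ) s)
        (Complex.exp (∑' k : ↑((T : Set (ℕ × ℕ))ᶜ), Complex.log (PSfac α β (k : ℕ × ℕ) s))) := by
    intro s hs
    have h := ((hsumlog s hs).hasSum).cexp
    refine h.congr_fun ?_
    intro k
    exact (Complex.exp_log (hne k k.2 s hs)).symm
  have hptotal : ∀ s ∈ ball (0:ℂ) R,
      HasProd (fun k : ℕ × ℕ => PSfac α β k s)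
        ((∏ k ∈ T, PSfac α β k s) *
          Complex.exp (∑' k : ↑((T : Set (ℕ × ℕ))ᶜ), Complex.log (PSfac α β (k : ℕ × ℕ) s))) := by
    intro s hs
    exact (T.hasProd _).mul_compl (hprodc s hs)
  refine ⟨fun s hs => (hptotal s hs).multipliable, ?_⟩
  -- differentiability of the log-sum
  have htu : TendstoUniformlyOn
      (fun (t : Finset ↑((T : Set (ℕ × ℕ))ᶜ)) s =>
        ∑ k ∈ t, Complex.log (PSfac α β (k : ℕ × ℕ) s))
      (fun s => ∑' k : ↑((T : Set (ℕ × ℕ))ᶜ), Complex.log (PSfac α β (k : ℕ × ℕ) s))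
      Filter.atTop (ball (0:ℂ) R) := by
    apply tendstoUniformlyOn_tsum (hus.subtype _)
    intro k s hs
    exact hlogb k k.2 s hs
  have hdiffsum : DifferentiableOn ℂ
      (fun s => ∑' k : ↑((T : Set (ℕ × ℕ))ᶜ), Complex.log (PSfac α β (k : ℕ × ℕ) s))
      (ball (0:ℂ) R) := by
    apply htu.tendstoLocallyUniformlyOn.differentiableOn ?_ isOpen_ball
    apply Filter.Eventually.of_forall
    intro t
    apply DifferentiableOn.fun_sum
    intro k _
    intro s hs
    exact (((PSfac_diff α β k).differentiableAt.clog
      (hslit k k.2 s hs)).differentiableWithinAt)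
  -- final function
  have hdiffF : DifferentiableOn ℂ
      (fun s => (∏ k ∈ T, PSfac α β k s) *
        Complex.exp (∑' k : ↑((T : Set (ℕ × ℕ))ᶜ), Complex.log (PSfac α β (k : ℕ × ℕ) s)))
      (ball (0:ℂ) R) := by
    apply DifferentiableOn.mul ?_ hdiffsum.cexp
    intro s hs
    exact (DifferentiableAt.fun_finsetProd
      (fun k _ => (PSfac_diff α β k).differentiableAt)).differentiableWithinAt
  apply hdiffF.congr
  intro s hs
  exact (hptotal s hs).tprod_eq

/-- The Patterson–Selberg zeta product `Z_Γ(s) = ∏_{k₁,k₂≥0} (1 - e^{i(k₁-k₂)β} e^{-(k₁+k₂+s)α})`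
converges absolutely for every `s ∈ ℂ` (the family is multipliable), and the resulting
function is entire. -/
theorem stmt_1 (α : ℝ) (hα : 0 < α) (β : ℝ) :
    (∀ s : ℂ, Multipliable fun k : ℕ × ℕ =>
        1 - Complex.exp (Complex.I * ((k.1 : ℂ) - (k.2 : ℂ)) * (β : ℂ)) *
            Complex.exp (-(((k.1 : ℂ) + (k.2 : ℂ) + s) * (α : ℂ)))) ∧
    Differentiable ℂ (fun s : ℂ => ∏' k : ℕ × ℕ,
        (1 - Complex.exp (Complex.I * ((k.1 : ℂ) - (k.2 : ℂ)) * (β : ℂ)) *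
            Complex.exp (-(((k.1 : ℂ) + (k.2 : ℂ) + s) * (α : ℂ))))) := by
  constructor
  · intro s
    have hs : s ∈ ball (0:ℂ) (‖s‖ + 1) := by
      simp only [mem_ball, dist_zero_right]
      linarith
    exact (PS_key α hα β (‖s‖ + 1)).1 s hs
  · intro s
    have hs : s ∈ ball (0:ℂ) (‖s‖ + 1) := by
      simp only [mem_ball, dist_zero_right]
      linarith
    exact ((PS_key α hα β (‖s‖ + 1)).2.differentiableAt
      (isOpen_ball.mem_nhds hs))
end

section
/- Let α > 0 and β ∈ ℝ, and let Z_Γ(s) = ∏_{k₁,k₂ ≥ 0} (1 − e^{i(k₁−k₂)β} e^{−(k₁+k₂+s)α}) be the Patterson–Selberg zeta function. Then for s ∈ ℂ one has Z_Γ(s) = 0 if and only if there exist k₁, k₂ ∈ ℕ∪{0} and n ∈ ℤ such that s = −(k₁+k₂) + i(k₁−k₂)β/α + 2πin/α. -/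
/-- The Patterson–Selberg zeta function attached to `α > 0`, `β ∈ ℝ`. -/
noncomputable def ZGamma (α β : ℝ) (s : ℂ) : ℂ :=
  ∏' k : ℕ × ℕ,
    (1 - Complex.exp (Complex.I * ((k.1 : ℂ) - (k.2 : ℂ)) * (β : ℂ)) *
        Complex.exp (-(((k.1 : ℂ) + (k.2 : ℂ) + s) * (α : ℂ))))

open Complex

/-- If a factor vanishes, the infinite product has value 0. -/
lemma hasProd_zero_of_eq_zero {ι : Type*} {f : ι → ℂ} {i₀ : ι} (h : f i₀ = 0) :
    HasProd f 0 := by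
  rw [HasProd]
  refine Filter.Tendsto.congr' ?_ tendsto_const_nhds
  filter_upwards [Filter.eventually_ge_atTop {i₀}] with S hS
  exact (Finset.prod_eq_zero (hS (Finset.mem_singleton_self i₀)) h).symm

lemma summable_norm_A (α : ℝ) (hα : 0 < α) (β : ℝ) (s : ℂ) :
    Summable (fun k : ℕ × ℕ => ‖Complex.exp (Complex.I * ((k.1 : ℂ) - (k.2 : ℂ)) * (β : ℂ)) *
        Complex.exp (-(((k.1 : ℂ) + (k.2 : ℂ) + s) * (α : ℂ)))‖) := by
  have hr : Real.exp (-α) < 1 := Real.exp_lt_one_iff.mpr (by linarith)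
  have hgeo : Summable (fun n : ℕ => Real.exp (-α) ^ n) :=
    summable_geometric_of_lt_one (Real.exp_nonneg _) hr
  have hsum : Summable (fun k : ℕ × ℕ => Real.exp (-α) ^ k.1 * Real.exp (-α) ^ k.2) :=
    hgeo.mul_of_nonneg hgeo (fun n => pow_nonneg (Real.exp_nonneg _) _)
      (fun n => pow_nonneg (Real.exp_nonneg _) _)
  refine ((hsum.mul_left (Real.exp (-(s.re * α)))).congr ?_)
  intro k
  rw [norm_mul, Complex.norm_exp, Complex.norm_exp]
  have h1 : (Complex.I * ((k.1 : ℂ) - (k.2 : ℂ)) * (β : ℂ)).re = 0 := by simp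
  have h2 : (-(((k.1 : ℂ) + (k.2 : ℂ) + s) * (α : ℂ))).re
      = (-α) * k.1 + ((-α) * k.2 + -(s.re * α)) := by simp; ring
  rw [h1, h2, Real.exp_zero, one_mul, Real.exp_add, Real.exp_add,
    mul_comm (-α) (k.1 : ℝ), mul_comm (-α) (k.2 : ℝ), Real.exp_nat_mul, Real.exp_nat_mul]
  ring

/-- Zeros of the Patterson–Selberg zeta function: `Z_Γ(s) = 0` iff
`s = -(k₁+k₂) + i(k₁-k₂)β/α + 2πin/α` for some `k₁, k₂ ∈ ℕ`, `n ∈ ℤ`. -/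
theorem stmt_2 (α : ℝ) (hα : 0 < α) (β : ℝ) (s : ℂ) :
    ZGamma α β s = 0 ↔
      ∃ (k₁ k₂ : ℕ) (n : ℤ),
        s = -((k₁ : ℂ) + (k₂ : ℂ)) + Complex.I * ((k₁ : ℂ) - (k₂ : ℂ)) * (β : ℂ) / (α : ℂ)
            + 2 * (Real.pi : ℂ) * Complex.I * (n : ℂ) / (α : ℂ) := by
  have hα0 : (α : ℂ) ≠ 0 := by exact_mod_cast hα.ne'
  set A : ℕ × ℕ → ℂ := fun k =>
    Complex.exp (Complex.I * ((k.1 : ℂ) - (k.2 : ℂ)) * (β : ℂ)) *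
      Complex.exp (-(((k.1 : ℂ) + (k.2 : ℂ) + s) * (α : ℂ))) with hA
  have hAnorm := summable_norm_A α hα β s
  -- a factor vanishes iff s has the stated form
  have hfac : ∀ k : ℕ × ℕ, (1 - A k = 0 ↔ ∃ n : ℤ,
      s = -((k.1 : ℂ) + (k.2 : ℂ)) + Complex.I * ((k.1 : ℂ) - (k.2 : ℂ)) * (β : ℂ) / (α : ℂ)
        + 2 * (Real.pi : ℂ) * Complex.I * (n : ℂ) / (α : ℂ)) := by
    intro k
    rw [sub_eq_zero, eq_comm]
    simp only [hA]
    rw [← Complex.exp_add, Complex.exp_eq_one_iff]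
    constructor
    · rintro ⟨n, hn⟩
      refine ⟨-n, ?_⟩
      have : s * (α : ℂ) = (-((k.1 : ℂ) + (k.2 : ℂ)) + Complex.I * ((k.1 : ℂ) - (k.2 : ℂ)) * (β : ℂ) / (α : ℂ)
        + 2 * (Real.pi : ℂ) * Complex.I * ((-n : ℤ) : ℂ) / (α : ℂ)) * (α : ℂ) := by
        field_simp at hn ⊢
        push_cast
        linear_combination -hn
      exact mul_right_cancel₀ hα0 this
    · rintro ⟨n, hn⟩
      refine ⟨-n, ?_⟩
      rw [hn]
      field_simp
      push_cast
      ring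
  constructor
  · intro h0
    by_contra hc
    push_neg at hc
    -- all factors are nonzero, so product is exp of a convergent sum, hence nonzero
    have hne : ∀ k : ℕ × ℕ, 1 - A k ≠ 0 := by
      intro k hk
      obtain ⟨n, hn⟩ := (hfac k).mp hk
      exact (hc k.1 k.2 n) (by simpa using hn)
    have hlog : Summable fun k : ℕ × ℕ => Complex.log (1 - A k) := by
      refine Summable.of_norm ?_
      refine Summable.of_norm_bounded_eventually (g := fun k => (3/2) * ‖A k‖)
        (hAnorm.mul_left _) ?_
      have htend : Filter.Tendsto (fun k : ℕ × ℕ => ‖A k‖) Filter.cofinite (nhds 0) :=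
        hAnorm.tendsto_cofinite_zero
      filter_upwards [htend.eventually_le_const (by norm_num : (0:ℝ) < 1/2)] with k hk
      have : ‖Complex.log (1 + (-A k))‖ ≤ (3/2) * ‖-A k‖ :=
        Complex.norm_log_one_add_half_le_self (by simpa using hk)
      simpa [sub_eq_add_neg] using this
    have : Complex.exp (∑' k, Complex.log (1 - A k)) = ∏' k, (1 - A k) :=
      Complex.cexp_tsum_eq_tprod hne hlog
    rw [ZGamma] at h0
    have h0' : ∏' (n : ℕ × ℕ), (1 - A n) = 0 := h0
    rw [h0'] at this
    exact Complex.exp_ne_zero _ this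
  · rintro ⟨k₁, k₂, n, hn⟩
    have hz : (1 : ℂ) - A (k₁, k₂) = 0 := (hfac (k₁, k₂)).mpr ⟨n, by simpa using hn⟩
    rw [ZGamma]
    exact (hasProd_zero_of_eq_zero (i₀ := (k₁, k₂)) hz).tprod_eq
end

section
/- Let α > 0 and β > 0, and let Z_Γ(s) = ∏_{k₁,k₂ ≥ 0} (1 − e^{i(k₁−k₂)β} e^{−(k₁+k₂+s)α}) be the Patterson–Selberg zeta function. Then for every s ∈ ℂ with Re s > 0 one has Z_Γ(s) = exp( −(1/4) ∑_{n=1}^∞ e^{−nα(s−1)} / ( n·[ sinh²(αn/2) + sin²(βn/2) ] ) ), the series on the right being absolutely convergent for Re s > 0. -/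
set_option maxHeartbeats 1000000

open Complex

lemma key_prod (x b : ℂ) :
    (1 - Complex.exp (2*(I*b) - 2*x)) * (1 - Complex.exp (-(2*(I*b) + 2*x)))
      = Complex.exp (-(2*x)) * (4 * (Complex.sinh x ^ 2 + Complex.sin b ^ 2)) := by
  have hP : Complex.exp x ≠ 0 := Complex.exp_ne_zero x
  have hQ : Complex.exp (I*b) ≠ 0 := Complex.exp_ne_zero _
  have pw : ∀ z : ℂ, Complex.exp (2*z) = Complex.exp z ^ 2 := by
    intro z; rw [two_mul, Complex.exp_add, sq]
  have e1 : Complex.exp (2*(I*b) - 2*x) = Complex.exp (I*b)^2 * (Complex.exp x ^ 2)⁻¹ := by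
    rw [Complex.exp_sub, pw, pw, div_eq_mul_inv]
  have e2 : Complex.exp (-(2*(I*b) + 2*x)) = (Complex.exp (I*b)^2 * Complex.exp x ^ 2)⁻¹ := by
    rw [Complex.exp_neg, Complex.exp_add, pw, pw]
  have e3 : Complex.exp (-(2*x)) = (Complex.exp x ^ 2)⁻¹ := by
    rw [Complex.exp_neg, pw]
  have hsinh : Complex.sinh x = (Complex.exp x - (Complex.exp x)⁻¹) / 2 := by
    rw [Complex.sinh, Complex.exp_neg]
  have hsin : Complex.sin b ^ 2 = -(((Complex.exp (I*b))⁻¹ - Complex.exp (I*b)) ^ 2) / 4 := by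
    rw [Complex.sin, div_pow, mul_pow, Complex.I_sq, neg_mul b I, Complex.exp_neg, mul_comm b I]
    ring
  rw [e1, e2, e3, hsinh, hsin]
  field_simp
  ring

/-- the factors of the Patterson–Selberg product -/
noncomputable def wPS (α β : ℝ) (s : ℂ) (k : ℕ × ℕ) : ℂ :=
  Complex.exp (Complex.I * ((k.1 : ℂ) - (k.2 : ℂ)) * (β : ℂ)) *
        Complex.exp (-(((k.1 : ℂ) + (k.2 : ℂ) + s) * (α : ℂ)))

lemma wPS_eq (α β : ℝ) (s : ℂ) (k : ℕ × ℕ) :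
    wPS α β s k = Complex.exp (Complex.I * ((k.1 : ℂ) - (k.2 : ℂ)) * (β : ℂ)
      - ((k.1 : ℂ) + (k.2 : ℂ) + s) * (α : ℂ)) := by
  rw [wPS, ← Complex.exp_add]
  congr 1

lemma wPS_norm (α β : ℝ) (s : ℂ) (k : ℕ × ℕ) :
    ‖wPS α β s k‖ = Real.exp (-α) ^ k.1 * Real.exp (-α) ^ k.2 * Real.exp (-(s.re * α)) := by
  rw [wPS_eq, Complex.norm_exp, ← Real.exp_nat_mul, ← Real.exp_nat_mul,
    ← Real.exp_add, ← Real.exp_add]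
  congr 1
  simp [Complex.sub_re, Complex.mul_re, Complex.add_re, Complex.add_im, Complex.mul_im]
  ring

lemma one_sub_ne (z : ℂ) (h : ‖z‖ < 1) : 1 - z ≠ 0 := by
  intro h0
  rw [sub_eq_zero] at h0
  rw [← h0] at h
  simp at h

theorem stmt_3' (α β : ℝ) (hα : 0 < α) (hβ : 0 < β) (s : ℂ) (hs : 0 < s.re) :
    Summable (fun n : ℕ =>
      Complex.exp (-((n : ℂ) + 1) * (α : ℂ) * (s - 1)) /
        (((n : ℂ) + 1) *
          ((Real.sinh (α * ((n : ℝ) + 1) / 2) ^ 2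
            + Real.sin (β * ((n : ℝ) + 1) / 2) ^ 2 : ℝ) : ℂ))) ∧
    (∏' k : ℕ × ℕ,
    (1 - Complex.exp (Complex.I * ((k.1 : ℂ) - (k.2 : ℂ)) * (β : ℂ)) *
        Complex.exp (-(((k.1 : ℂ) + (k.2 : ℂ) + s) * (α : ℂ))))) = Complex.exp (-(1 / 4) *
      ∑' n : ℕ,
        Complex.exp (-((n : ℂ) + 1) * (α : ℂ) * (s - 1)) /
          (((n : ℂ) + 1) *
            ((Real.sinh (α * ((n : ℝ) + 1) / 2) ^ 2
              + Real.sin (β * ((n : ℝ) + 1) / 2) ^ 2 : ℝ) : ℂ))) := by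
  set t : ℕ → ℂ := fun n =>
      Complex.exp (-((n : ℂ) + 1) * (α : ℂ) * (s - 1)) /
        (((n : ℂ) + 1) *
          ((Real.sinh (α * ((n : ℝ) + 1) / 2) ^ 2
            + Real.sin (β * ((n : ℝ) + 1) / 2) ^ 2 : ℝ) : ℂ)) with ht
  set r : ℝ := Real.exp (-α) with hrdef
  set ρ : ℝ := Real.exp (-(s.re * α)) with hρdef
  have hρ1 : ρ < 1 := Real.exp_lt_one_iff.mpr (by nlinarith)
  have hρ0 : (0:ℝ) < ρ := Real.exp_pos _
  have hr1 : r < 1 := Real.exp_lt_one_iff.mpr (by linarith)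
  have hr0 : (0:ℝ) < r := Real.exp_pos _
  set w : ℕ × ℕ → ℂ := wPS α β s with hw
  have hwnorm : ∀ k : ℕ × ℕ, ‖w k‖ = r ^ k.1 * r ^ k.2 * ρ := fun k => wPS_norm α β s k
  have hbound : ∀ k : ℕ × ℕ, r ^ k.1 * r ^ k.2 * ρ ≤ ρ := by
    intro k
    have h1 : r ^ k.1 ≤ 1 := pow_le_one₀ hr0.le hr1.le
    have h2 : r ^ k.2 ≤ 1 := pow_le_one₀ hr0.le hr1.le
    have h3 : (0:ℝ) ≤ r ^ k.2 := (pow_pos hr0 _).le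
    have h12 : r ^ k.1 * r ^ k.2 ≤ 1 := by nlinarith
    calc r ^ k.1 * r ^ k.2 * ρ ≤ 1 * ρ := mul_le_mul_of_nonneg_right h12 hρ0.le
      _ = ρ := one_mul ρ
  have hw1 : ∀ k, ‖w k‖ < 1 := by
    intro k; rw [hwnorm k]; exact lt_of_le_of_lt (hbound k) hρ1
  have hne : ∀ k, 1 - w k ≠ 0 := fun k => one_sub_ne _ (hw1 k)
  -- the doubly indexed family
  set f : ℕ → ℕ × ℕ → ℂ := fun n k => w k ^ (n+1) / ((n:ℂ)+1) with hfdef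
  have hcast : ∀ n : ℕ, ‖((n:ℂ)+1)‖ = (n:ℝ)+1 := by
    intro n
    rw [show ((n:ℂ)+1) = ((n+1:ℕ):ℂ) by push_cast; ring, Complex.norm_natCast]
    push_cast; ring
  have hFsum : Summable (Function.uncurry f) := by
    apply Summable.of_norm_bounded
      (g := fun p : ℕ × (ℕ × ℕ) => ρ ^ p.1 * (r ^ p.2.1 * r ^ p.2.2 * ρ))
    · exact Summable.mul_of_nonneg (summable_geometric_of_lt_one hρ0.le hρ1)
        (((Summable.mul_of_nonneg (summable_geometric_of_lt_one hr0.le hr1)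
          (summable_geometric_of_lt_one hr0.le hr1) (fun _ => pow_nonneg hr0.le _)
          (fun _ => pow_nonneg hr0.le _))).mul_right ρ)
        (fun _ => pow_nonneg hρ0.le _) (fun p => by positivity)
    · rintro ⟨n, k⟩
      show ‖w k ^ (n+1) / ((n:ℂ)+1)‖ ≤ _
      rw [norm_div, norm_pow, hcast]
      have h1 : ‖w k‖ ^ (n+1) / ((n:ℝ)+1) ≤ ‖w k‖ ^ (n+1) := by
        apply div_le_self (by positivity)
        have := Nat.cast_nonneg (α := ℝ) n
        linarith
      refine h1.trans ?_
      rw [hwnorm k]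
      calc (r ^ k.1 * r ^ k.2 * ρ) ^ (n+1)
          = (r ^ k.1 * r ^ k.2 * ρ) * (r ^ k.1 * r ^ k.2 * ρ) ^ n := by ring
        _ ≤ (r ^ k.1 * r ^ k.2 * ρ) * ρ ^ n := by
            apply mul_le_mul_of_nonneg_left (pow_le_pow_left₀ (by positivity) (hbound k) n)
              (by positivity)
        _ = ρ ^ n * (r ^ k.1 * r ^ k.2 * ρ) := by ring
  -- per-k logarithm series
  have hlog : ∀ k, HasSum (fun n : ℕ => f n k) (-Complex.log (1 - w k)) := by
    intro k
    have h0 := Complex.hasSum_taylorSeries_neg_log (hw1 k)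
    have h1 := (hasSum_nat_add_iff' 1).mpr h0
    simp only [Finset.range_one, Finset.sum_singleton, pow_zero, Nat.cast_zero, div_zero,
      sub_zero] at h1
    rw [hfdef]
    push_cast at h1
    exact h1
  have hlogsum : ∀ k, Summable fun n => f n k := fun k => (hlog k).summable
  have hlogeq : ∀ k, Complex.log (1 - w k) = -∑' n, f n k := by
    intro k; rw [(hlog k).tsum_eq, neg_neg]
  have hGsum : Summable (fun k : ℕ × ℕ => ∑' n, f n k) :=
    ⟨_, HasSum.prod_fiberwise (hFsum.prod_symm.hasSum) (fun k => (hlogsum k).hasSum)⟩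
  have hHsum : Summable (fun n : ℕ => ∑' k : ℕ × ℕ, f n k) :=
    ⟨_, HasSum.prod_fiberwise hFsum.hasSum (fun n => (hFsum.prod_factor n).hasSum)⟩
  have hswap : ∑' (k : ℕ × ℕ), ∑' n, f n k = ∑' n, ∑' (k : ℕ × ℕ), f n k := Summable.tsum_comm hFsum
  have hLog : Summable (fun k : ℕ × ℕ => Complex.log (1 - w k)) := by
    refine (hGsum.neg).congr fun k => ?_
    exact (hlogeq k).symm
  -- the inner sums
  have hgn : ∀ n : ℕ, ∑' k : ℕ × ℕ, f n k = t n / 4 := by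
    intro n
    set u : ℂ := Complex.exp (((n:ℂ)+1) * (I*(β:ℂ) - (α:ℂ))) with hu
    set v : ℂ := Complex.exp (-(((n:ℂ)+1) * (I*(β:ℂ) + (α:ℂ)))) with hv
    have hure : ((((n:ℂ)+1) * (I*(β:ℂ) - (α:ℂ))).re) = -(((n:ℝ)+1)*α) := by
      simp [Complex.mul_re, Complex.sub_re, Complex.add_re, Complex.mul_im,
        Complex.sub_im, Complex.add_im]
    have hvre : ((-(((n:ℂ)+1) * (I*(β:ℂ) + (α:ℂ)))).re) = -(((n:ℝ)+1)*α) := by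
      simp [Complex.mul_re, Complex.sub_re, Complex.add_re, Complex.mul_im,
        Complex.sub_im, Complex.add_im]
    have hnα : (0:ℝ) < ((n:ℝ)+1)*α := by positivity
    have hu1 : ‖u‖ < 1 := by
      rw [hu, Complex.norm_exp, hure]
      exact Real.exp_lt_one_iff.mpr (by linarith)
    have hv1 : ‖v‖ < 1 := by
      rw [hv, Complex.norm_exp, hvre]
      exact Real.exp_lt_one_iff.mpr (by linarith)
    have hune : 1 - u ≠ 0 := one_sub_ne _ hu1
    have hvne : 1 - v ≠ 0 := one_sub_ne _ hv1
    have hsu : Summable fun i : ℕ => ‖u ^ i‖ := by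
      simpa [norm_pow] using summable_geometric_of_lt_one (norm_nonneg u) hu1
    have hsv : Summable fun i : ℕ => ‖v ^ i‖ := by
      simpa [norm_pow] using summable_geometric_of_lt_one (norm_nonneg v) hv1
    have hpow : ∀ k : ℕ × ℕ, w k ^ (n+1)
        = Complex.exp (-(((n:ℂ)+1)*s*(α:ℂ))) * (u ^ k.1 * v ^ k.2) := by
      intro k
      rw [hw, wPS_eq, hu, hv, ← Complex.exp_nat_mul, ← Complex.exp_nat_mul,
        ← Complex.exp_nat_mul, ← Complex.exp_add, ← Complex.exp_add]
      congr 1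
      push_cast
      ring
    have hinner : ∑' k : ℕ × ℕ, w k ^ (n+1)
        = Complex.exp (-(((n:ℂ)+1)*s*(α:ℂ))) * ((1-u)⁻¹ * (1-v)⁻¹) := by
      calc ∑' k : ℕ × ℕ, w k ^ (n+1)
          = ∑' k : ℕ × ℕ, Complex.exp (-(((n:ℂ)+1)*s*(α:ℂ))) * (u ^ k.1 * v ^ k.2) :=
            tsum_congr hpow
        _ = Complex.exp (-(((n:ℂ)+1)*s*(α:ℂ))) * ∑' k : ℕ × ℕ, u ^ k.1 * v ^ k.2 :=
            tsum_mul_left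
        _ = Complex.exp (-(((n:ℂ)+1)*s*(α:ℂ))) * ((∑' i : ℕ, u ^ i) * (∑' j : ℕ, v ^ j)) := by
            rw [← tsum_mul_tsum_of_summable_norm hsu hsv]
        _ = Complex.exp (-(((n:ℂ)+1)*s*(α:ℂ))) * ((1-u)⁻¹ * (1-v)⁻¹) := by
            rw [tsum_geometric_of_norm_lt_one hu1, tsum_geometric_of_norm_lt_one hv1]
    have hx : u = Complex.exp (2*(I*((β*((n:ℝ)+1)/2 : ℝ):ℂ)) - 2*((α*((n:ℝ)+1)/2 : ℝ):ℂ)) := by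
      rw [hu]; congr 1; push_cast; ring
    have hy : v = Complex.exp (-(2*(I*((β*((n:ℝ)+1)/2 : ℝ):ℂ)) + 2*((α*((n:ℝ)+1)/2 : ℝ):ℂ))) := by
      rw [hv]; congr 1; push_cast; ring
    have he : Complex.exp (-(2*((α*((n:ℝ)+1)/2 : ℝ):ℂ))) = Complex.exp (-(((n:ℂ)+1)*(α:ℂ))) := by
      congr 1; push_cast; ring
    have hkey : (1 - u) * (1 - v) = Complex.exp (-(((n:ℂ)+1)*(α:ℂ))) *
        (4 * ((Real.sinh (α * ((n : ℝ) + 1) / 2) ^ 2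
            + Real.sin (β * ((n : ℝ) + 1) / 2) ^ 2 : ℝ) : ℂ)) := by
      rw [hx, hy, key_prod, he, ← Complex.ofReal_sinh, ← Complex.ofReal_sin]
      norm_cast
    have hMne : ((n:ℂ)+1) ≠ 0 := by
      rw [show ((n:ℂ)+1) = ((n+1:ℕ):ℂ) by push_cast; ring]
      exact_mod_cast Nat.succ_ne_zero n
    have hDpos : (0:ℝ) < Real.sinh (α * ((n : ℝ) + 1) / 2) ^ 2
        + Real.sin (β * ((n : ℝ) + 1) / 2) ^ 2 := by
      have h1 : 0 < Real.sinh (α * ((n : ℝ) + 1) / 2) := by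
        rw [← Real.sinh_zero]
        apply Real.sinh_lt_sinh.mpr
        positivity
      have := sq_nonneg (Real.sin (β * ((n : ℝ) + 1) / 2))
      nlinarith
    have hDne : ((Real.sinh (α * ((n : ℝ) + 1) / 2) ^ 2
        + Real.sin (β * ((n : ℝ) + 1) / 2) ^ 2 : ℝ) : ℂ) ≠ 0 := by
      exact_mod_cast ne_of_gt hDpos
    have hexp : Complex.exp (-(((n:ℂ)+1)*s*(α:ℂ))) * Complex.exp (((n:ℂ)+1)*(α:ℂ))
        = Complex.exp (-((n:ℂ)+1)*(α:ℂ)*(s-1)) := by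
      rw [← Complex.exp_add]; congr 1; ring
    calc ∑' k : ℕ × ℕ, f n k = (∑' k : ℕ × ℕ, w k ^ (n+1)) / ((n:ℂ)+1) := tsum_div_const
      _ = Complex.exp (-(((n:ℂ)+1)*s*(α:ℂ))) * (((1-u) * (1-v))⁻¹) / ((n:ℂ)+1) := by
          rw [hinner, mul_inv]
      _ = t n / 4 := by
          rw [hkey, ht]
          rw [mul_inv, show (Complex.exp (-(((n:ℂ)+1)*(α:ℂ))))⁻¹
            = Complex.exp (((n:ℂ)+1)*(α:ℂ)) by rw [← Complex.exp_neg, neg_neg]]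
          rw [show Complex.exp (-(((n:ℂ)+1)*s*(α:ℂ))) * (Complex.exp (((n:ℂ)+1)*(α:ℂ)) *
            (4 * ((Real.sinh (α * ((n : ℝ) + 1) / 2) ^ 2
            + Real.sin (β * ((n : ℝ) + 1) / 2) ^ 2 : ℝ) : ℂ))⁻¹) / ((n:ℂ)+1)
            = (Complex.exp (-(((n:ℂ)+1)*s*(α:ℂ))) * Complex.exp (((n:ℂ)+1)*(α:ℂ))) *
              ((4 * ((Real.sinh (α * ((n : ℝ) + 1) / 2) ^ 2
              + Real.sin (β * ((n : ℝ) + 1) / 2) ^ 2 : ℝ) : ℂ))⁻¹ / ((n:ℂ)+1)) by ring]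
          rw [hexp]
          field_simp
  constructor
  · have h4 := hHsum.mul_left (4:ℂ)
    refine h4.congr fun n => ?_
    rw [hgn n]; ring
  · have hprod := Complex.cexp_tsum_eq_tprod (ι := ℕ × ℕ) (f := fun k => 1 - w k)
      hne hLog
    have h2 := hprod
    have hZ : (∏' k : ℕ × ℕ,
      (1 - Complex.exp (Complex.I * ((k.1 : ℂ) - (k.2 : ℂ)) * (β : ℂ)) *
        Complex.exp (-(((k.1 : ℂ) + (k.2 : ℂ) + s) * (α : ℂ))))) = ∏' k : ℕ × ℕ, (1 - w k) := rfl
    rw [hZ, ← h2]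
    show Complex.exp _ = Complex.exp _
    congr 1
    calc ∑' k : ℕ × ℕ, Complex.log (1 - w k) = ∑' k : ℕ × ℕ, -(∑' n, f n k) :=
        tsum_congr hlogeq
      _ = -∑' k : ℕ × ℕ, ∑' n, f n k := tsum_neg
      _ = -∑' n, ∑' k : ℕ × ℕ, f n k := by rw [hswap]
      _ = -∑' n, t n / 4 := by rw [tsum_congr hgn]
      _ = -(1/4) * ∑' n, t n := by rw [tsum_div_const]; ring


/-- For `Re s > 0`,
`Z_Γ(s) = exp(-(1/4) ∑_{n≥1} e^{-nα(s-1)} / (n (sinh²(αn/2) + sin²(βn/2))))`,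
the series being absolutely convergent. -/
theorem stmt_3 (α β : ℝ) (hα : 0 < α) (hβ : 0 < β) (s : ℂ) (hs : 0 < s.re) :
    Summable (fun n : ℕ =>
      Complex.exp (-((n : ℂ) + 1) * (α : ℂ) * (s - 1)) /
        (((n : ℂ) + 1) *
          ((Real.sinh (α * ((n : ℝ) + 1) / 2) ^ 2
            + Real.sin (β * ((n : ℝ) + 1) / 2) ^ 2 : ℝ) : ℂ))) ∧
    ZGamma α β s = Complex.exp (-(1 / 4) *
      ∑' n : ℕ,
        Complex.exp (-((n : ℂ) + 1) * (α : ℂ) * (s - 1)) /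
          (((n : ℂ) + 1) *
            ((Real.sinh (α * ((n : ℝ) + 1) / 2) ^ 2
              + Real.sin (β * ((n : ℝ) + 1) / 2) ^ 2 : ℝ) : ℂ))) := by
  obtain ⟨h1, h2⟩ := stmt_3' α β hα hβ s hs
  exact ⟨h1, by rw [ZGamma]; exact h2⟩
end

section
/- Let τ be in the upper half-plane, q = e^{2πiτ}, α = 2π·Im τ, β = 2π·Re τ, t = Re τ / Im τ, and let Z_Γ denote the Patterson–Selberg zeta function with parameters α, β. Let ℓ ∈ ℕ∪{0} and ε ∈ ℂ satisfy |q^{ℓ+ε}| < 1, and set ξ = ℓ + ε. Then the infinite product ∏_{m=ℓ}^∞ (1 − q^{m+ε}) converges and equals Z_Γ(ξ(1−it)) / Z_Γ(ξ(1−it) + 1 + it); in particular the denominator Z_Γ(ξ(1−it)+1+it) is nonzero. -/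
/-- Complex power `q^w = e^{2πiτw}` for `q = e^{2πiτ}`. -/
noncomputable def qpow (τ w : ℂ) : ℂ := Complex.exp (2 * Real.pi * Complex.I * τ * w)

open Complex

lemma aux_mult {ι : Type*} (v : ι → ℂ) (hv : Summable v) (hlt : ∀ n, ‖v n‖ < 1) :
    Summable (fun n => Complex.log (1 - v n)) ∧ Multipliable (fun n => 1 - v n) ∧
    (∏' n, (1 - v n)) = Complex.exp (∑' n, Complex.log (1 - v n)) := by
  have hne : ∀ n, 1 - v n ≠ 0 := by
    intro n h
    rw [sub_eq_zero] at h
    have := hlt n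
    rw [← h] at this
    simp at this
  have hlog : Summable (fun n => Complex.log (1 - v n)) := by
    have hev : ∀ᶠ n in Filter.cofinite, ‖Complex.log (1 - v n)‖ ≤ (3/2) * ‖v n‖ := by
      have h0 := hv.tendsto_cofinite_zero
      have h2 : ∀ᶠ n in Filter.cofinite, ‖v n‖ ≤ 1/2 := by
        have := Metric.tendsto_nhds.mp h0 (1/2) (by norm_num)
        filter_upwards [this] with n hn
        simpa [dist_eq_norm] using hn.le
      filter_upwards [h2] with n hn
      have := Complex.norm_log_one_add_half_le_self (z := -(v n)) (by simpa using hn)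
      simpa [sub_eq_add_neg] using this
    exact Summable.of_norm_bounded_eventually (hv.norm.mul_left (3/2)) hev
  have hm := Complex.multipliable_of_summable_log hlog
  refine ⟨hlog, hm, ?_⟩
  have key := Complex.cexp_tsum_eq_tprod hne hlog
  rw [← key]

set_option maxHeartbeats 1000000

/-- For `τ` in the upper half-plane, `ℓ ∈ ℕ`, `ε ∈ ℂ` with `|q^{ℓ+ε}| < 1`, `ξ = ℓ + ε`,
`t = Re τ / Im τ`: the product `∏_{m=ℓ}^∞ (1 - q^{m+ε})` converges and equals
`Z_Γ(ξ(1-it)) / Z_Γ(ξ(1-it)+1+it)`, the denominator being nonzero. -/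
theorem stmt_4 (τ : ℂ) (hτ : 0 < τ.im)
    (α β t : ℝ) (hα : α = 2 * Real.pi * τ.im) (hβ : β = 2 * Real.pi * τ.re)
    (ht : t = τ.re / τ.im)
    (ℓ : ℕ) (ε : ℂ) (hsmall : ‖qpow τ ((ℓ : ℂ) + ε)‖ < 1)
    (ξ : ℂ) (hξ : ξ = (ℓ : ℂ) + ε) :
    Multipliable (fun m : ℕ => 1 - qpow τ ((ℓ : ℂ) + (m : ℂ) + ε)) ∧
    ZGamma α β (ξ * (1 - Complex.I * (t : ℂ)) + 1 + Complex.I * (t : ℂ)) ≠ 0 ∧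
    (∏' m : ℕ, (1 - qpow τ ((ℓ : ℂ) + (m : ℂ) + ε)))
      = ZGamma α β (ξ * (1 - Complex.I * (t : ℂ)))
        / ZGamma α β (ξ * (1 - Complex.I * (t : ℂ)) + 1 + Complex.I * (t : ℂ)) := by
  have him : τ.im ≠ 0 := ne_of_gt hτ
  have hαpos : 0 < α := by rw [hα]; positivity
  have htα : t * α = β := by rw [ht, hα, hβ]; field_simp
  have htαC : (t : ℂ) * (α : ℂ) = (β : ℂ) := by exact_mod_cast congrArg Complex.ofReal htα
  have hA : 2 * (Real.pi : ℂ) * Complex.I * τ = Complex.I * (β : ℂ) - (α : ℂ) := by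
    rw [hα, hβ]
    push_cast
    linear_combination (2 * (Real.pi : ℂ) * Complex.I) * (Complex.re_add_im τ).symm
      + (2 * (Real.pi : ℂ) * (τ.im : ℂ)) * Complex.I_mul_I
  set A : ℂ := Complex.I * (β : ℂ) - (α : ℂ) with hAdef
  set B : ℂ := -(α : ℂ) - Complex.I * (β : ℂ) with hBdef
  have hAre : A.re = -α := by simp [hAdef]
  have hBre : B.re = -α := by simp [hBdef]
  set v1 : ℕ × ℕ → ℂ := fun k => Complex.exp (A * k.1 + B * k.2 + A * ξ) with hv1
  set v2 : ℕ × ℕ → ℂ := fun k => Complex.exp (A * k.1 + B * k.2 + B + A * ξ) with hv2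
  set u : ℕ → ℂ := fun m => Complex.exp (A * m + A * ξ) with hu
  set r : ℝ := Real.exp (-α) with hrdef
  set W : ℝ := ‖Complex.exp (A * ξ)‖ with hWdef
  have habs : ∀ (z : ℂ) (n : ℕ), ‖Complex.exp (z * n)‖ = Real.exp z.re ^ n := by
    intro z n
    rw [Complex.norm_exp, ← Real.exp_nat_mul]
    congr 1
    simp [Complex.mul_re]
    ring
  have hr0 : 0 < r := Real.exp_pos _
  have hr1 : r < 1 := by
    rw [hrdef]
    exact Real.exp_lt_one_iff.mpr (by linarith)
  have hW0 : 0 ≤ W := norm_nonneg _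
  have hW : W < 1 := by
    have hexps : 2 * (Real.pi : ℂ) * Complex.I * τ * ((ℓ : ℂ) + ε) = A * ξ := by
      rw [hξ]; linear_combination ((ℓ : ℂ) + ε) * hA
    rw [hWdef, ← hexps]
    simpa [qpow] using hsmall
  have hnorm1 : ∀ k : ℕ × ℕ, ‖v1 k‖ = r ^ k.1 * (r ^ k.2 * W) := by
    intro k
    rw [hv1]
    simp only
    rw [Complex.exp_add, Complex.exp_add, norm_mul, norm_mul, habs, habs, hAre, hBre]
    rw [hrdef, hWdef]
    ring
  have hnorm2 : ∀ k : ℕ × ℕ, ‖v2 k‖ = r ^ k.1 * (r ^ k.2 * (r * W)) := by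
    intro k
    rw [hv2]
    simp only
    rw [Complex.exp_add, Complex.exp_add, Complex.exp_add, norm_mul, norm_mul, norm_mul,
      habs, habs, hAre, hBre, Complex.norm_exp, hBre]
    rw [hrdef, hWdef]
    ring
  have hnormu : ∀ m : ℕ, ‖u m‖ = r ^ m * W := by
    intro m
    rw [hu]
    simp only
    rw [Complex.exp_add, norm_mul, habs, hAre]
  have hsumr : Summable (fun n : ℕ => r ^ n) := summable_geometric_of_lt_one hr0.le hr1
  have hs1 : Summable v1 := by
    apply Summable.of_norm
    have := hsumr.mul_of_nonneg (hsumr.mul_right W) (fun n => by positivity)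
      (fun n => by positivity)
    simpa [hnorm1] using this
  have hs2 : Summable v2 := by
    apply Summable.of_norm
    have := hsumr.mul_of_nonneg (hsumr.mul_right (r * W)) (fun n => by positivity)
      (fun n => by positivity)
    simpa [hnorm2] using this
  have hsu : Summable u := by
    apply Summable.of_norm
    have := hsumr.mul_right W
    simpa [hnormu] using this
  have hpow1 : ∀ n : ℕ, r ^ n ≤ 1 := fun n => pow_le_one₀ hr0.le hr1.le
  have hlt1 : ∀ k, ‖v1 k‖ < 1 := by
    intro k
    rw [hnorm1]
    have h1 : r ^ k.2 * W ≤ W := mul_le_of_le_one_left hW0 (hpow1 _)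
    have h2 : r ^ k.1 * (r ^ k.2 * W) ≤ r ^ k.2 * W :=
      mul_le_of_le_one_left (by positivity) (hpow1 _)
    linarith
  have hlt2 : ∀ k, ‖v2 k‖ < 1 := by
    intro k
    rw [hnorm2]
    have h0 : r * W ≤ W := mul_le_of_le_one_left hW0 hr1.le
    have h1 : r ^ k.2 * (r * W) ≤ r * W := mul_le_of_le_one_left (by positivity) (hpow1 _)
    have h2 : r ^ k.1 * (r ^ k.2 * (r * W)) ≤ r ^ k.2 * (r * W) :=
      mul_le_of_le_one_left (by positivity) (hpow1 _)
    linarith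
  have hltu : ∀ m, ‖u m‖ < 1 := by
    intro m
    rw [hnormu]
    have h2 : r ^ m * W ≤ W := mul_le_of_le_one_left hW0 (hpow1 _)
    linarith
  obtain ⟨Su, Mu, EQu⟩ := aux_mult u hsu hltu
  obtain ⟨S1, M1, EQ1⟩ := aux_mult v1 hs1 hlt1
  obtain ⟨S2, M2, EQ2⟩ := aux_mult v2 hs2 hlt2
  -- term identities
  have hterm1 : ∀ k : ℕ × ℕ,
      (1 - Complex.exp (Complex.I * ((k.1 : ℂ) - (k.2 : ℂ)) * (β : ℂ)) *
        Complex.exp (-(((k.1 : ℂ) + (k.2 : ℂ) + (ξ * (1 - Complex.I * (t : ℂ)))) * (α : ℂ))))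
        = 1 - v1 k := by
    intro k
    rw [hv1]
    simp only
    rw [← Complex.exp_add]
    congr 2
    rw [hAdef, hBdef]
    linear_combination (ξ * Complex.I) * htαC
  have hterm2 : ∀ k : ℕ × ℕ,
      (1 - Complex.exp (Complex.I * ((k.1 : ℂ) - (k.2 : ℂ)) * (β : ℂ)) *
        Complex.exp (-(((k.1 : ℂ) + (k.2 : ℂ) +
          (ξ * (1 - Complex.I * (t : ℂ)) + 1 + Complex.I * (t : ℂ))) * (α : ℂ))))
        = 1 - v2 k := by
    intro k
    rw [hv2]
    simp only
    rw [← Complex.exp_add]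
    congr 2
    rw [hAdef, hBdef]
    linear_combination ((ξ - 1) * Complex.I) * htαC
  have hq : ∀ m : ℕ, qpow τ ((ℓ : ℂ) + (m : ℂ) + ε) = u m := by
    intro m
    rw [hu]
    simp only [qpow]
    congr 1
    rw [hξ]
    linear_combination ((ℓ : ℂ) + (m : ℂ) + ε) * hA
  have hfeq : (fun m : ℕ => 1 - qpow τ ((ℓ : ℂ) + (m : ℂ) + ε)) = fun m => 1 - u m :=
    funext fun m => by rw [hq m]
  have hZ1 : ZGamma α β (ξ * (1 - Complex.I * (t : ℂ))) = ∏' k : ℕ × ℕ, (1 - v1 k) :=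
    tprod_congr hterm1
  have hZ2 : ZGamma α β (ξ * (1 - Complex.I * (t : ℂ)) + 1 + Complex.I * (t : ℂ))
      = ∏' k : ℕ × ℕ, (1 - v2 k) := tprod_congr hterm2
  have hZ2ne : ZGamma α β (ξ * (1 - Complex.I * (t : ℂ)) + 1 + Complex.I * (t : ℂ)) ≠ 0 := by
    rw [hZ2, EQ2]; exact Complex.exp_ne_zero _
  -- the splitting identity, via logarithms
  set L1 : ℕ × ℕ → ℂ := fun k => Complex.log (1 - v1 k) with hL1
  set L2 : ℕ × ℕ → ℂ := fun k => Complex.log (1 - v2 k) with hL2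
  set Lu : ℕ → ℂ := fun m => Complex.log (1 - u m) with hLu
  have hv10 : ∀ c : ℕ, v1 (c, 0) = u c := by
    intro c
    rw [hv1, hu]
    simp only
    congr 1
    push_cast
    ring
  have hv1s : ∀ c b : ℕ, v1 (c, b + 1) = v2 (c, b) := by
    intro c b
    rw [hv1, hv2]
    simp only
    congr 1
    push_cast
    ring
  have S1s : Summable (fun k : ℕ × ℕ => L1 (k.2, k.1)) :=
    (Equiv.prodComm ℕ ℕ).summable_iff.mpr S1
  have S2s : Summable (fun k : ℕ × ℕ => L2 (k.2, k.1)) :=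
    (Equiv.prodComm ℕ ℕ).summable_iff.mpr S2
  have e1 : (∑' k : ℕ × ℕ, L1 k) = ∑' (b : ℕ), ∑' (c : ℕ), L1 (c, b) := by
    rw [← Summable.tsum_prod S1s]
    have h := (Equiv.prodComm ℕ ℕ).tsum_eq (fun k : ℕ × ℕ => L1 (k.2, k.1))
    simpa using h
  have e2 : (∑' k : ℕ × ℕ, L2 k) = ∑' (b : ℕ), ∑' (c : ℕ), L2 (c, b) := by
    rw [← Summable.tsum_prod S2s]
    have h := (Equiv.prodComm ℕ ℕ).tsum_eq (fun k : ℕ × ℕ => L2 (k.2, k.1))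
    simpa using h
  have hF : Summable (fun b : ℕ => ∑' c : ℕ, L1 (c, b)) := S1s.prod
  have hsplitlog : (∑' k : ℕ × ℕ, L1 k) = (∑' m : ℕ, Lu m) + ∑' k : ℕ × ℕ, L2 k := by
    rw [e1, Summable.tsum_eq_zero_add hF, e2]
    congr 1
    · refine tsum_congr fun c => ?_
      rw [hL1, hLu]
      simp only
      rw [hv10 c]
    · refine tsum_congr fun b => ?_
      refine tsum_congr fun c => ?_
      rw [hL1, hL2]
      simp only
      rw [hv1s c b]
  have hsplit : (∏' k : ℕ × ℕ, (1 - v1 k))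
      = (∏' m : ℕ, (1 - u m)) * ∏' k : ℕ × ℕ, (1 - v2 k) := by
    rw [EQ1, EQu, EQ2, ← Complex.exp_add, ← hsplitlog]
  refine ⟨by rw [hfeq]; exact Mu, hZ2ne, ?_⟩
  rw [hfeq, hZ1, hZ2, hsplit]
  rw [mul_div_assoc, div_self (by rw [EQ2]; exact Complex.exp_ne_zero _), mul_one]
end

section
/- Let τ be in the upper half-plane and q = e^{2πiτ}. Let ℓ ∈ ℕ∪{0} and ε ∈ ℂ satisfy |q^{ℓ+ε}| < 1. Then ∑_{m=ℓ}^∞ Log(1 − q^{m+ε}) = − ∑_{n=1}^∞ q^{(ℓ+ε)n} (1 − conj(q)ⁿ) |q|^{−n} / ( 4n·|sin(nπτ)|² ), where Log is the principal branch of the complex logarithm and both series converge absolutely. -/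
lemma qpow_add (τ a b : ℂ) : qpow τ (a + b) = qpow τ a * qpow τ b := by
  rw [qpow, qpow, qpow, ← Complex.exp_add]; ring_nf

lemma qpow_nat (τ : ℂ) (n : ℕ) : qpow τ n = Complex.exp (2 * Real.pi * Complex.I * τ) ^ n := by
  rw [qpow, ← Complex.exp_nat_mul]; ring_nf

lemma qpow_mul_nat (τ a : ℂ) (n : ℕ) : qpow τ (a * n) = qpow τ a ^ n := by
  rw [qpow, qpow, ← Complex.exp_nat_mul]; ring_nf

lemma key_trig (τ : ℂ) (k : ℕ) :
    ‖Complex.exp (2 * Real.pi * Complex.I * τ)‖ ^ k *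
      (4 * ‖Complex.sin ((k : ℂ) * Real.pi * τ)‖ ^ 2)
      = ‖1 - Complex.exp (2 * Real.pi * Complex.I * τ) ^ k‖ ^ 2 := by
  set z : ℂ := (k : ℂ) * Real.pi * τ with hz
  have e2 : Complex.exp (z * Complex.I) ^ 2
      = Complex.exp (2 * Real.pi * Complex.I * τ) ^ k := by
    rw [← Complex.exp_nat_mul, ← Complex.exp_nat_mul]; congr 1; push_cast [hz]; ring
  have h1 : Complex.exp (-z * Complex.I) * Complex.exp (z * Complex.I) = 1 := by
    rw [← Complex.exp_add]; simp
  have hsin : Complex.sin z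
      = Complex.exp (-z * Complex.I) * (1 - Complex.exp (2 * Real.pi * Complex.I * τ) ^ k)
        * Complex.I / 2 := by
    rw [Complex.sin, ← e2]
    linear_combination (Complex.I / 2 * Complex.exp (z * Complex.I)) * h1
  have habs : ‖Complex.sin z‖
      = Real.exp ((k : ℝ) * Real.pi * τ.im) *
        ‖1 - Complex.exp (2 * Real.pi * Complex.I * τ) ^ k‖ / 2 := by
    rw [hsin]
    rw [norm_div, norm_mul, norm_mul, Complex.norm_I, Complex.norm_exp]
    have : (-z * Complex.I).re = (k : ℝ) * Real.pi * τ.im := by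
      simp [hz, Complex.mul_re, Complex.mul_im]
    rw [this]
    simp
  have hqa : ‖Complex.exp (2 * Real.pi * Complex.I * τ)‖
      = Real.exp (-(2 * Real.pi * τ.im)) := by
    rw [Complex.norm_exp]; congr 1
    simp [Complex.mul_re, Complex.mul_im]
  have h0 : Real.exp (-(2 * Real.pi * τ.im)) ^ k * Real.exp ((k : ℝ) * Real.pi * τ.im) ^ 2 = 1 := by
    rw [← Real.exp_nat_mul, ← Real.exp_nat_mul, ← Real.exp_add]
    rw [show ((k : ℝ) * -(2 * Real.pi * τ.im) + (2 : ℕ) * ((k : ℝ) * Real.pi * τ.im)) = 0 by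
      push_cast; ring, Real.exp_zero]
  rw [habs, hqa, div_pow, mul_pow]
  linear_combination (‖1 - Complex.exp (2 * Real.pi * Complex.I * τ) ^ k‖ ^ 2) * h0


/-- For `τ` in the upper half-plane, `q = e^{2πiτ}`, `ℓ ∈ ℕ`, `ε ∈ ℂ` with `|q^{ℓ+ε}| < 1`:
`∑_{m=ℓ}^∞ Log(1 - q^{m+ε}) = -∑_{n≥1} q^{(ℓ+ε)n}(1 - conj(q)ⁿ)|q|^{-n}/(4n|sin(nπτ)|²)`,
both series converging absolutely. -/
theorem stmt_5 (τ : ℂ) (hτ : 0 < τ.im)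
    (q : ℂ) (hq : q = Complex.exp (2 * Real.pi * Complex.I * τ))
    (ℓ : ℕ) (ε : ℂ) (hsmall : ‖qpow τ ((ℓ : ℂ) + ε)‖ < 1) :
    Summable (fun m : ℕ => Complex.log (1 - qpow τ ((ℓ : ℂ) + (m : ℂ) + ε))) ∧
    Summable (fun n : ℕ =>
      qpow τ (((ℓ : ℂ) + ε) * ((n : ℂ) + 1)) * (1 - (starRingEnd ℂ) q ^ (n + 1)) /
        (((‖q‖ : ℝ) : ℂ) ^ (n + 1) *
          (4 * ((n : ℂ) + 1) *
            ((‖Complex.sin (((n : ℂ) + 1) * (Real.pi : ℂ) * τ)‖ ^ 2 : ℝ) : ℂ)))) ∧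
    (∑' m : ℕ, Complex.log (1 - qpow τ ((ℓ : ℂ) + (m : ℂ) + ε)))
      = -∑' n : ℕ,
          qpow τ (((ℓ : ℂ) + ε) * ((n : ℂ) + 1)) * (1 - (starRingEnd ℂ) q ^ (n + 1)) /
            (((‖q‖ : ℝ) : ℂ) ^ (n + 1) *
              (4 * ((n : ℂ) + 1) *
                ((‖Complex.sin (((n : ℂ) + 1) * (Real.pi : ℂ) * τ)‖ ^ 2 : ℝ) : ℂ))) := by
  set x : ℂ := qpow τ ((ℓ : ℂ) + ε) with hxdef
  have hA : ‖q‖ < 1 := by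
    rw [hq, Complex.norm_exp, Real.exp_lt_one_iff]
    have : (2 * (Real.pi : ℂ) * Complex.I * τ).re = -(2 * Real.pi * τ.im) := by
      simp [Complex.mul_re, Complex.mul_im]
    rw [this]
    nlinarith [Real.pi_pos]
  have hA0 : 0 ≤ ‖q‖ := norm_nonneg q
  have hx : ‖x‖ < 1 := hsmall
  -- rewriting the log arguments
  have hxq : ∀ m : ℕ, qpow τ ((ℓ : ℂ) + (m : ℂ) + ε) = x * q ^ m := by
    intro m
    rw [show ((ℓ : ℂ) + (m : ℂ) + ε) = ((ℓ : ℂ) + ε) + (m : ℂ) by ring, qpow_add, qpow_nat, hq]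
  have hxn : ∀ n : ℕ, qpow τ (((ℓ : ℂ) + ε) * ((n : ℂ) + 1)) = x ^ (n + 1) := by
    intro n
    rw [show ((n : ℂ) + 1) = ((n + 1 : ℕ) : ℂ) by push_cast; ring, qpow_mul_nat]
  have hxqm : ∀ m : ℕ, ‖x * q ^ m‖ < 1 := by
    intro m
    rw [norm_mul, norm_pow]
    calc ‖x‖ * ‖q‖ ^ m ≤ ‖x‖ * 1 := by
          gcongr
          exact pow_le_one₀ hA0 hA.le
      _ < 1 := by rwa [mul_one]
  have hqn1 : ∀ n : ℕ, (1 : ℂ) - q ^ (n + 1) ≠ 0 := by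
    intro n
    rw [sub_ne_zero]
    intro h
    have := congrArg norm h.symm
    rw [norm_one, norm_pow] at this
    have h2 : ‖q‖ ^ (n + 1) < 1 := pow_lt_one₀ hA0 hA (Nat.succ_ne_zero n)
    rw [this] at h2; exact lt_irrefl _ h2
  have hcqn1 : ∀ n : ℕ, (1 : ℂ) - (starRingEnd ℂ) q ^ (n + 1) ≠ 0 := by
    intro n
    rw [show ((starRingEnd ℂ) q) ^ (n+1) = (starRingEnd ℂ) (q ^ (n+1)) by rw [map_pow]]
    rw [sub_ne_zero]
    intro h
    have := congrArg norm h.symm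
    rw [norm_one, Complex.norm_conj, norm_pow] at this
    have h2 : ‖q‖ ^ (n + 1) < 1 := pow_lt_one₀ hA0 hA (Nat.succ_ne_zero n)
    rw [this] at h2; exact lt_irrefl _ h2
  -- the double family
  set f : ℕ × ℕ → ℂ := fun p => (x * q ^ p.1) ^ (p.2 + 1) / ((p.2 : ℂ) + 1) with hfdef
  have hf : Summable f := by
    have hb : Summable (fun p : ℕ × ℕ =>
        ‖q‖ ^ p.1 * ‖x‖ ^ (p.2 + 1)) := by
      apply summable_mul_of_summable_norm (f := fun m : ℕ => ‖q‖ ^ m)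
        (g := fun n : ℕ => ‖x‖ ^ (n + 1))
      · simpa [abs_of_nonneg, hA0] using summable_geometric_of_lt_one hA0 hA
      · apply Summable.of_nonneg_of_le (fun n => by positivity)
          (fun n => ?_) (summable_geometric_of_lt_one (norm_nonneg x) hx)
        · rw [Real.norm_eq_abs, abs_of_nonneg (by positivity)]
          exact pow_le_pow_of_le_one (norm_nonneg x) hx.le (by omega)
    apply Summable.of_norm_bounded hb
    rintro ⟨m, n⟩
    simp only [hfdef, norm_div, norm_pow, norm_mul]
    have hd : (1 : ℝ) ≤ ‖(n : ℂ) + 1‖ := by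
      rw [show ((n : ℂ) + 1) = ((n + 1 : ℕ) : ℂ) by push_cast; ring, Complex.norm_natCast]
      exact_mod_cast Nat.one_le_iff_ne_zero.2 (Nat.succ_ne_zero n)
    calc (‖x‖ * ‖q‖ ^ m) ^ (n + 1) / ‖(n : ℂ) + 1‖
        ≤ (‖x‖ * ‖q‖ ^ m) ^ (n + 1) := div_le_self (by positivity) hd
      _ = ‖x‖ ^ (n + 1) * (‖q‖ ^ m) ^ (n + 1) := by rw [mul_pow]
      _ ≤ ‖x‖ ^ (n + 1) * ‖q‖ ^ m := by
          apply mul_le_mul_of_nonneg_left ?_ (by positivity)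
          rw [← pow_mul]
          exact pow_le_pow_of_le_one hA0 hA.le (by nlinarith)
      _ = ‖q‖ ^ m * ‖x‖ ^ (n + 1) := by ring
  -- fiberwise sums over n (log series)
  have h_n : ∀ m : ℕ, HasSum (fun n => f (m, n)) (-(Complex.log (1 - x * q ^ m))) := by
    intro m
    have h := Complex.hasSum_taylorSeries_neg_log (z := x * q ^ m)
      (by exact hxqm m)
    have h2 := (hasSum_nat_add_iff (f := fun n : ℕ => (x * q ^ m) ^ n / (n : ℂ)) 1).mpr
      (by simpa using h)
    convert h2 using 2 with n
    · rfl
    push_cast [hfdef]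
    ring
  -- fiberwise sums over m (geometric series)
  set g : ℕ → ℂ := fun n => x ^ (n + 1) / ((n : ℂ) + 1) * (1 - q ^ (n + 1))⁻¹ with hgdef
  have h_m : ∀ n : ℕ, HasSum (fun m => f (m, n)) (g n) := by
    intro n
    have hqn : ‖q ^ (n + 1)‖ < 1 := by
      rw [norm_pow]
      exact pow_lt_one₀ hA0 hA (Nat.succ_ne_zero n)
    have h := (hasSum_geometric_of_norm_lt_one hqn).mul_left (x ^ (n + 1) / ((n : ℂ) + 1))
    convert h using 2 with m
    · rfl
    simp only [hfdef]
    rw [mul_pow, ← pow_mul, ← pow_mul, mul_comm m (n + 1)]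
    ring
  have hT1 : HasSum (fun m : ℕ => -(Complex.log (1 - x * q ^ m))) (∑' p, f p) :=
    hf.hasSum.prod_fiberwise h_n
  have hswap : Summable (fun p : ℕ × ℕ => f (p.2, p.1)) :=
    (Equiv.prodComm ℕ ℕ).summable_iff.mpr hf
  have hT2 : HasSum g (∑' p, f p) := by
    have h := hswap.hasSum.prod_fiberwise (fun n => h_m n)
    have he : (∑' p : ℕ × ℕ, f (p.2, p.1)) = ∑' p : ℕ × ℕ, f p :=
      (Equiv.prodComm ℕ ℕ).tsum_eq f
    rwa [he] at h
  have hlog_sum : HasSum (fun m : ℕ => Complex.log (1 - x * q ^ m)) (-(∑' p, f p)) := by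
    simpa using hT1.neg
  -- identify the statement's terms with g
  have ht_eq : ∀ n : ℕ,
      qpow τ (((ℓ : ℂ) + ε) * ((n : ℂ) + 1)) * (1 - (starRingEnd ℂ) q ^ (n + 1)) /
        (((‖q‖ : ℝ) : ℂ) ^ (n + 1) *
          (4 * ((n : ℂ) + 1) *
            ((‖Complex.sin (((n : ℂ) + 1) * (Real.pi : ℂ) * τ)‖ ^ 2 : ℝ) : ℂ)))
      = g n := by
    intro n
    have hk := key_trig τ (n + 1)
    rw [← hq] at hk
    rw [show (((n + 1 : ℕ) : ℂ)) = (n : ℂ) + 1 by push_cast; ring] at hk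
    have hB : ((‖1 - q ^ (n + 1)‖ ^ 2 : ℝ) : ℂ)
        = (1 - q ^ (n + 1)) * (1 - (starRingEnd ℂ) q ^ (n + 1)) := by
      rw [← Complex.normSq_eq_norm_sq, ← Complex.mul_conj]
      congr 1
      rw [map_sub, map_one, map_pow]
    have hden : ((‖q‖ : ℝ) : ℂ) ^ (n + 1) *
        (4 * ((n : ℂ) + 1) *
          ((‖Complex.sin (((n : ℂ) + 1) * (Real.pi : ℂ) * τ)‖ ^ 2 : ℝ) : ℂ))
        = ((n : ℂ) + 1) * ((1 - q ^ (n + 1)) * (1 - (starRingEnd ℂ) q ^ (n + 1))) := by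
      rw [← hB]
      have : ((‖q‖ : ℝ) : ℂ) ^ (n + 1) *
          (4 * ((‖Complex.sin (((n : ℂ) + 1) * (Real.pi : ℂ) * τ)‖ ^ 2 : ℝ) : ℂ))
          = ((‖1 - q ^ (n + 1)‖ ^ 2 : ℝ) : ℂ) := by
        rw [← hk]
        push_cast
        ring
      calc ((‖q‖ : ℝ) : ℂ) ^ (n + 1) *
          (4 * ((n : ℂ) + 1) *
            ((‖Complex.sin (((n : ℂ) + 1) * (Real.pi : ℂ) * τ)‖ ^ 2 : ℝ) : ℂ))
          = ((n : ℂ) + 1) * (((‖q‖ : ℝ) : ℂ) ^ (n + 1) *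
            (4 * ((‖Complex.sin (((n : ℂ) + 1) * (Real.pi : ℂ) * τ)‖ ^ 2 : ℝ) : ℂ))) := by
            ring
        _ = ((n : ℂ) + 1) * ((‖1 - q ^ (n + 1)‖ ^ 2 : ℝ) : ℂ) := by rw [this]
    rw [hxn n, hden, hgdef]
    have hn0 : ((n : ℂ) + 1) ≠ 0 := Nat.cast_add_one_ne_zero n
    field_simp [hqn1 n, hcqn1 n]
  have hfun : (fun m : ℕ => Complex.log (1 - qpow τ ((ℓ : ℂ) + (m : ℂ) + ε)))
      = fun m : ℕ => Complex.log (1 - x * q ^ m) := funext fun m => by rw [hxq m]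
  have htfun : (fun n : ℕ =>
      qpow τ (((ℓ : ℂ) + ε) * ((n : ℂ) + 1)) * (1 - (starRingEnd ℂ) q ^ (n + 1)) /
        (((‖q‖ : ℝ) : ℂ) ^ (n + 1) *
          (4 * ((n : ℂ) + 1) *
            ((‖Complex.sin (((n : ℂ) + 1) * (Real.pi : ℂ) * τ)‖ ^ 2 : ℝ) : ℂ)))) = g :=
    funext ht_eq
  refine ⟨?_, ?_, ?_⟩
  · rw [hfun]; exact hlog_sum.summable
  · rw [htfun]; exact hT2.summable
  · rw [hfun, htfun, hlog_sum.tsum_eq, hT2.tsum_eq]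
end

section
/- Let τ be in the upper half-plane and q = e^{2πiτ}. Let ℓ ∈ ℕ∪{0} and ε ∈ ℂ satisfy |q^{ℓ+ε}| < 1. Then ∑_{m=ℓ}^∞ Log(1 + q^{m+ε}) = − ∑_{n=1}^∞ (−1)ⁿ q^{(ℓ+ε)n} (1 − conj(q)ⁿ) |q|^{−n} / ( 4n·|sin(nπτ)|² ), where Log is the principal branch of the complex logarithm and both series converge absolutely. -/
lemma aux_sin (τ q : ℂ) (hq : q = Complex.exp (2 * Real.pi * Complex.I * τ)) (n : ℕ) :
    (4 : ℂ) * ((‖q‖ : ℝ) : ℂ) ^ n *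
      ((‖Complex.sin ((n : ℂ) * (Real.pi : ℂ) * τ)‖ ^ 2 : ℝ) : ℂ)
      = (1 - q ^ n) * (1 - (starRingEnd ℂ) q ^ n) := by
  have h2 : Complex.exp ((n : ℂ) * Real.pi * τ * Complex.I) ^ 2 = q ^ n := by
    rw [sq, ← Complex.exp_add, hq, ← Complex.exp_nat_mul]
    congr 1; ring
  have h1 : Complex.sin ((n : ℂ) * Real.pi * τ) * Complex.exp ((n : ℂ) * Real.pi * τ * Complex.I)
      = (1 - q ^ n) * Complex.I / 2 := by
    rw [Complex.sin, ← h2, neg_mul, Complex.exp_neg]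
    have he := Complex.exp_ne_zero ((n : ℂ) * Real.pi * τ * Complex.I)
    field_simp
  have habs := congrArg (norm : ℂ → ℝ) h1
  rw [norm_mul, norm_div, norm_mul, Complex.norm_I, mul_one] at habs
  have habs2 : ‖Complex.exp ((n : ℂ) * Real.pi * τ * Complex.I)‖ ^ 2
      = ‖q‖ ^ n := by
    rw [← norm_pow, h2, norm_pow]
  have h3 : (‖Complex.sin ((n : ℂ) * Real.pi * τ)‖ *
      ‖Complex.exp ((n : ℂ) * Real.pi * τ * Complex.I)‖) ^ 2
      = (‖1 - q ^ n‖ / ‖(2 : ℂ)‖) ^ 2 := by rw [habs]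
  rw [mul_pow, habs2, div_pow] at h3
  have habs2' : ‖(2 : ℂ)‖ ^ 2 = 4 := by
    rw [show ((2:ℂ)) = ((2:ℝ):ℂ) by norm_num, Complex.norm_real]; norm_num
  rw [habs2'] at h3
  have hr : 4 * ‖q‖ ^ n * ‖Complex.sin ((n : ℂ) * Real.pi * τ)‖ ^ 2
      = ‖1 - q ^ n‖ ^ 2 := by linarith
  have hc : (1 - q ^ n) * (1 - (starRingEnd ℂ) q ^ n)
      = ((‖1 - q ^ n‖ ^ 2 : ℝ) : ℂ) := by
    rw [← map_pow, show (1 : ℂ) - (starRingEnd ℂ) (q ^ n) = (starRingEnd ℂ) (1 - q ^ n) by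
      rw [map_sub, map_one], Complex.mul_conj, Complex.normSq_eq_norm_sq]
  rw [hc, ← hr]
  push_cast
  try ring

/-- For `τ` in the upper half-plane, `q = e^{2πiτ}`, `ℓ ∈ ℕ`, `ε ∈ ℂ` with `|q^{ℓ+ε}| < 1`:
`∑_{m=ℓ}^∞ Log(1 + q^{m+ε}) = -∑_{n≥1} (-1)ⁿ q^{(ℓ+ε)n}(1 - conj(q)ⁿ)|q|^{-n}/(4n|sin(nπτ)|²)`,
both series converging absolutely. -/
theorem stmt_6 (τ : ℂ) (hτ : 0 < τ.im)
    (q : ℂ) (hq : q = Complex.exp (2 * Real.pi * Complex.I * τ))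
    (ℓ : ℕ) (ε : ℂ) (hsmall : ‖qpow τ ((ℓ : ℂ) + ε)‖ < 1) :
    Summable (fun m : ℕ => Complex.log (1 + qpow τ ((ℓ : ℂ) + (m : ℂ) + ε))) ∧
    Summable (fun n : ℕ =>
      (-1 : ℂ) ^ (n + 1) *
        (qpow τ (((ℓ : ℂ) + ε) * ((n : ℂ) + 1)) * (1 - (starRingEnd ℂ) q ^ (n + 1))) /
        (((‖q‖ : ℝ) : ℂ) ^ (n + 1) *
          (4 * ((n : ℂ) + 1) *
            ((‖Complex.sin (((n : ℂ) + 1) * (Real.pi : ℂ) * τ)‖ ^ 2 : ℝ) : ℂ)))) ∧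
    (∑' m : ℕ, Complex.log (1 + qpow τ ((ℓ : ℂ) + (m : ℂ) + ε)))
      = -∑' n : ℕ,
          (-1 : ℂ) ^ (n + 1) *
            (qpow τ (((ℓ : ℂ) + ε) * ((n : ℂ) + 1)) * (1 - (starRingEnd ℂ) q ^ (n + 1))) /
            (((‖q‖ : ℝ) : ℂ) ^ (n + 1) *
              (4 * ((n : ℂ) + 1) *
                ((‖Complex.sin (((n : ℂ) + 1) * (Real.pi : ℂ) * τ)‖ ^ 2 : ℝ) : ℂ))) := by
  set z : ℂ := qpow τ ((ℓ : ℂ) + ε) with hzdef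
  have hz : ‖z‖ < 1 := hsmall
  -- |q| < 1
  have hq1 : ‖q‖ < 1 := by
    rw [hq, Complex.norm_exp]
    rw [Real.exp_lt_one_iff]
    have hre : (2 * (Real.pi : ℂ) * Complex.I * τ).re = -(2 * Real.pi * τ.im) := by
      simp [Complex.mul_re, Complex.mul_im]
      try ring
    rw [hre]
    have := Real.pi_pos
    nlinarith
  -- key rewriting
  have key : ∀ m : ℕ, qpow τ ((ℓ : ℂ) + (m : ℂ) + ε) = z * q ^ m := by
    intro m
    rw [hzdef, hq]
    unfold qpow
    rw [← Complex.exp_nat_mul, ← Complex.exp_add]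
    congr 1; ring
  have hzq : ∀ m : ℕ, ‖z * q ^ m‖ < 1 := by
    intro m
    have h1 : ‖q ^ m‖ ≤ 1 := by
      rw [norm_pow]; exact pow_le_one₀ (norm_nonneg q) hq1.le
    calc ‖z * q ^ m‖ = ‖z‖ * ‖q ^ m‖ := by
          rw [norm_mul]
      _ ≤ ‖z‖ * 1 := by
          exact mul_le_mul_of_nonneg_left h1 (norm_nonneg z)
      _ < 1 := by rw [mul_one]; exact hz
  -- the double-indexed family
  set f : ℕ → ℕ → ℂ := fun m n => (-1 : ℂ) ^ (n + 1) * (z * q ^ m) ^ n / (n : ℂ) with hfdef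
  have hlog : ∀ m : ℕ, Complex.log (1 + qpow τ ((ℓ : ℂ) + (m : ℂ) + ε)) = ∑' n, f m n := by
    intro m
    rw [key m]
    exact (Complex.hasSum_taylorSeries_log (hzq m)).tsum_eq.symm
  -- summability of the double family
  have hbound : ∀ p : ℕ × ℕ, ‖f p.1 p.2‖ ≤ ‖q‖ ^ p.1 * ‖z‖ ^ p.2 := by
    rintro ⟨m, n⟩
    match n with
    | 0 =>
      simp only [hfdef, pow_zero, Nat.cast_zero, div_zero, norm_zero]
      positivity
    | Nat.succ j =>
      have e1 : ‖f m (j + 1)‖ = ‖(z * q ^ m) ^ (j + 1)‖ / ‖((j + 1 : ℕ) : ℂ)‖ := by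
        simp [hfdef, norm_div, norm_mul]
      have e2 : ‖((j + 1 : ℕ) : ℂ)‖ = (j + 1 : ℝ) := by
        rw [Complex.norm_natCast]; push_cast; ring
      have e3 : (1 : ℝ) ≤ ‖((j + 1 : ℕ) : ℂ)‖ := by rw [e2]; norm_num
      calc ‖f m (j + 1)‖ ≤ ‖(z * q ^ m) ^ (j + 1)‖ := by
            rw [e1]; exact div_le_self (norm_nonneg _) e3
        _ = ‖z‖ ^ (j + 1) * ‖q‖ ^ (m * (j + 1)) := by
            rw [norm_pow, norm_mul, norm_pow, mul_pow, ← pow_mul]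
        _ ≤ ‖z‖ ^ (j + 1) * ‖q‖ ^ m := by
            refine mul_le_mul_of_nonneg_left ?_ (by positivity)
            exact pow_le_pow_of_le_one (norm_nonneg q) hq1.le
              (Nat.le_mul_of_pos_right m (Nat.succ_pos j))
        _ = ‖q‖ ^ m * ‖z‖ ^ (j + 1) := by ring
  have hgeom : Summable (fun p : ℕ × ℕ => ‖q‖ ^ p.1 * ‖z‖ ^ p.2) :=
    Summable.mul_of_nonneg
      (summable_geometric_of_lt_one (norm_nonneg q) hq1)
      (summable_geometric_of_lt_one (norm_nonneg z) hz)
      (fun m => by positivity) (fun n => by positivity)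
  have hF : Summable (Function.uncurry f) := by
    apply Summable.of_norm
    exact hgeom.of_nonneg_of_le (fun p => norm_nonneg _) hbound
  -- marginal summabilities
  have hmarg1 : Summable (fun m : ℕ => ∑' n : ℕ, f m n) := hF.prod
  have hmarg2 : Summable (fun n : ℕ => ∑' m : ℕ, f m n) := hF.prod_symm.prod
  -- first conjunct
  have hsum1 : Summable (fun m : ℕ => Complex.log (1 + qpow τ ((ℓ : ℂ) + (m : ℂ) + ε))) := by
    refine hmarg1.congr fun m => ?_
    exact (hlog m).symm
  -- inner sums over m
  have hqn : ∀ j : ℕ, ‖q ^ (j + 1)‖ < 1 := by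
    intro j
    rw [norm_pow]
    exact pow_lt_one₀ (norm_nonneg q) hq1 (Nat.succ_ne_zero j)
  have hgsum : ∀ j : ℕ, HasSum (fun m : ℕ => f m (j + 1))
      (((-1 : ℂ) ^ (j + 2) * z ^ (j + 1) / ((j + 1 : ℕ) : ℂ)) * (1 - q ^ (j + 1))⁻¹) := by
    intro j
    have hg := (hasSum_geometric_of_norm_lt_one (hqn j)).mul_left
      ((-1 : ℂ) ^ (j + 2) * z ^ (j + 1) / ((j + 1 : ℕ) : ℂ))
    refine hg.congr_fun fun m => ?_
    simp only [hfdef]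
    rw [mul_pow, ← pow_mul, ← pow_mul, mul_comm m (j+1), pow_mul]
    ring
  -- nonvanishing
  have hne : ∀ j : ℕ, (1 : ℂ) - q ^ (j + 1) ≠ 0 := by
    intro j h
    have h1 : q ^ (j + 1) = 1 := by linear_combination -h
    have := hqn j
    rw [h1] at this
    simp at this
  have hnec : ∀ j : ℕ, (1 : ℂ) - (starRingEnd ℂ) q ^ (j + 1) ≠ 0 := by
    intro j h
    apply hne j
    have := congrArg (starRingEnd ℂ) h
    simpa using this
  -- the literal RHS term equals the negated inner sum
  have hT : ∀ j : ℕ,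
      (-1 : ℂ) ^ (j + 1) *
        (qpow τ (((ℓ : ℂ) + ε) * ((j : ℂ) + 1)) * (1 - (starRingEnd ℂ) q ^ (j + 1))) /
        (((‖q‖ : ℝ) : ℂ) ^ (j + 1) *
          (4 * ((j : ℂ) + 1) *
            ((‖Complex.sin (((j : ℂ) + 1) * (Real.pi : ℂ) * τ)‖ ^ 2 : ℝ) : ℂ)))
      = -(((-1 : ℂ) ^ (j + 2) * z ^ (j + 1) / ((j + 1 : ℕ) : ℂ)) * (1 - q ^ (j + 1))⁻¹) := by
    intro j
    have hz1 : qpow τ (((ℓ : ℂ) + ε) * ((j : ℂ) + 1)) = z ^ (j + 1) := by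
      rw [hzdef]
      unfold qpow
      rw [← Complex.exp_nat_mul]
      congr 1; push_cast; ring
    have hs := aux_sin τ q hq (j + 1)
    push_cast at hs
    have hn0 : ((j : ℂ) + 1) ≠ 0 := by
      have h' : ((j + 1 : ℕ) : ℂ) ≠ 0 := Nat.cast_ne_zero.mpr (Nat.succ_ne_zero j)
      push_cast at h'
      exact h'
    rw [hz1]
    push_cast
    rw [show ((‖q‖ : ℝ) : ℂ) ^ (j + 1) *
        (4 * ((j : ℂ) + 1) *
          ((‖Complex.sin (((j : ℂ) + 1) * (Real.pi : ℂ) * τ)‖ : ℂ) ^ 2))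
        = ((j : ℂ) + 1) * ((1 - q ^ (j + 1)) * (1 - (starRingEnd ℂ) q ^ (j + 1))) by
      rw [← hs]; ring]
    field_simp [hne j, hnec j]
    ring
  -- second conjunct
  have hshift : Summable (fun j : ℕ => ∑' m : ℕ, f m (j + 1)) := by
    exact (summable_nat_add_iff 1).mpr hmarg2
  have hsum2 : Summable (fun n : ℕ =>
      (-1 : ℂ) ^ (n + 1) *
        (qpow τ (((ℓ : ℂ) + ε) * ((n : ℂ) + 1)) * (1 - (starRingEnd ℂ) q ^ (n + 1))) /
        (((‖q‖ : ℝ) : ℂ) ^ (n + 1) *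
          (4 * ((n : ℂ) + 1) *
            ((‖Complex.sin (((n : ℂ) + 1) * (Real.pi : ℂ) * τ)‖ ^ 2 : ℝ) : ℂ)))) := by
    refine (hshift.neg).congr fun j => ?_
    rw [hT j, (hgsum j).tsum_eq]
  refine ⟨hsum1, hsum2, ?_⟩
  -- the equality
  have hzero : (∑' m : ℕ, f m 0) = 0 := by
    simp [hfdef]
  calc (∑' m : ℕ, Complex.log (1 + qpow τ ((ℓ : ℂ) + (m : ℂ) + ε)))
      = ∑' m : ℕ, ∑' n : ℕ, f m n := tsum_congr hlog
    _ = ∑' n : ℕ, ∑' m : ℕ, f m n := (hF.tsum_comm).symm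
    _ = (∑' m : ℕ, f m 0) + ∑' n : ℕ, ∑' m : ℕ, f m (n + 1) := hmarg2.tsum_eq_zero_add
    _ = ∑' n : ℕ, ∑' m : ℕ, f m (n + 1) := by rw [hzero, zero_add]
    _ = ∑' n : ℕ, -((-1 : ℂ) ^ (n + 1) *
          (qpow τ (((ℓ : ℂ) + ε) * ((n : ℂ) + 1)) * (1 - (starRingEnd ℂ) q ^ (n + 1))) /
          (((‖q‖ : ℝ) : ℂ) ^ (n + 1) *
            (4 * ((n : ℂ) + 1) *
              ((‖Complex.sin (((n : ℂ) + 1) * (Real.pi : ℂ) * τ)‖ ^ 2 : ℝ) : ℂ)))) := by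
        refine tsum_congr fun n => ?_
        rw [(hgsum n).tsum_eq, hT n, neg_neg]
    _ = -∑' n : ℕ, ((-1 : ℂ) ^ (n + 1) *
          (qpow τ (((ℓ : ℂ) + ε) * ((n : ℂ) + 1)) * (1 - (starRingEnd ℂ) q ^ (n + 1))) /
          (((‖q‖ : ℝ) : ℂ) ^ (n + 1) *
            (4 * ((n : ℂ) + 1) *
              ((‖Complex.sin (((n : ℂ) + 1) * (Real.pi : ℂ) * τ)‖ ^ 2 : ℝ) : ℂ)))) := by
        rw [tsum_neg]
end

section
/- Let c : (ℕ∪{0}) × ℤ → ℤ be a finitely supported function, and let q, y, Q ∈ ℂ with |q| < 1, y ≠ 0, |Q| < 1, and such that |Qⁿ q^m y^l| < 1 for all integers n ≥ 1, m ≥ 0, l ∈ ℤ with c(nm, l) ≠ 0. Then ∏_{n≥1} ∏_{m≥0} ∏_{l∈ℤ} (1 − Qⁿ q^m y^l)^{−c(nm,l)} = exp( ∑_{k≥1} (1/k) ∑_{n≥1} ∑_{m≥0} ∑_{l∈ℤ} c(nm, l) (Qⁿ q^m y^l)^k ), where all products and series converge absolutely. -/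
open Complex Finset Function

namespace SQEG

private lemma aux_norm_term (a w : ℂ) (k : ℕ) :
    ‖a * w ^ (k + 1) / ((k : ℂ) + 1)‖ = ‖a‖ * ‖w‖ ^ (k + 1) / ((k : ℝ) + 1) := by
  rw [norm_div, norm_mul, norm_pow,
    show ((k : ℂ) + 1) = ((k + 1 : ℕ) : ℂ) by push_cast; ring, Complex.norm_natCast]
  push_cast; ring

private lemma aux_fiber (a w : ℂ) (hw : ‖w‖ < 1) :
    HasSum (fun k : ℕ => a * w ^ (k + 1) / ((k : ℂ) + 1)) (-a * Complex.log (1 - w)) := by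
  have h0 : HasSum (fun n : ℕ => w ^ n / (n : ℂ)) (-Complex.log (1 - w)) :=
    Complex.hasSum_taylorSeries_neg_log hw
  have h1 := (hasSum_nat_add_iff' (f := fun n : ℕ => w ^ n / (n : ℂ)) 1).mpr h0
  simp only [Finset.range_one, Finset.sum_singleton, Nat.cast_zero, div_zero, sub_zero] at h1
  have h2 := h1.mul_left a
  rw [show -a * Complex.log (1 - w) = a * -Complex.log (1 - w) by ring]
  exact h2.congr_fun fun k => by push_cast; ring

/-- The basic monomial. -/
noncomputable def X (q y Q : ℂ) (p : ℕ × ℕ × ℤ) : ℂ := Q ^ (p.1 + 1) * q ^ p.2.1 * y ^ p.2.2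

/-- The exponent coefficient. -/
def cc (c : ℕ × ℤ → ℤ) (p : ℕ × ℕ × ℤ) : ℤ := c ((p.1 + 1) * p.2.1, p.2.2)

/-- The summand. -/
noncomputable def g (c : ℕ × ℤ → ℤ) (q y Q : ℂ) (z : ℕ × ℕ × ℕ × ℤ) : ℂ :=
  (cc c z.2 : ℂ) * (X q y Q z.2) ^ (z.1 + 1) / ((z.1 : ℂ) + 1)

/-- The logarithmic term. -/
noncomputable def t (c : ℕ × ℤ → ℤ) (q y Q : ℂ) (p : ℕ × ℕ × ℤ) : ℂ :=
  -(cc c p : ℂ) * Complex.log (1 - X q y Q p)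

variable {c : ℕ × ℤ → ℤ} {q y Q : ℂ}

section

variable (hsmall : ∀ (n m : ℕ) (l : ℤ), 1 ≤ n → c (n * m, l) ≠ 0 →
      ‖Q ^ n * q ^ m * y ^ l‖ < 1)

include hsmall

private lemma hxlt (p : ℕ × ℕ × ℤ) (h : cc c p ≠ 0) : ‖X q y Q p‖ < 1 :=
  hsmall (p.1 + 1) p.2.1 p.2.2 (Nat.le_add_left 1 p.1) h

private lemma fiber_hasSum (p : ℕ × ℕ × ℤ) :
    HasSum (fun k : ℕ => g c q y Q (k, p)) (t c q y Q p) := by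
  by_cases h : cc c p = 0
  · have h1 : (fun k : ℕ => g c q y Q (k, p)) = fun _ => 0 := by
      funext k; simp [g, h]
    have h2 : t c q y Q p = 0 := by simp [t, h]
    rw [h1, h2]
    exact hasSum_zero
  · have h3 := aux_fiber ((cc c p : ℤ) : ℂ) (X q y Q p) (hxlt hsmall p h)
    have h4 : (fun k : ℕ => g c q y Q (k, p))
        = fun k : ℕ => ((cc c p : ℤ) : ℂ) * (X q y Q p) ^ (k + 1) / ((k : ℂ) + 1) := rfl
    have h5 : t c q y Q p = -((cc c p : ℤ) : ℂ) * Complex.log (1 - X q y Q p) := rfl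
    rw [h4, h5]
    exact h3

private lemma fiber_summable_norm (p : ℕ × ℕ × ℤ) :
    Summable (fun k : ℕ => ‖g c q y Q (k, p)‖) := by
  by_cases h : cc c p = 0
  · have h1 : (fun k : ℕ => ‖g c q y Q (k, p)‖) = fun _ => 0 := by
      funext k; simp [g, h]
    rw [h1]; exact summable_zero
  · have hx := hxlt hsmall p h
    refine Summable.of_nonneg_of_le (fun k => norm_nonneg _) (fun k => ?_)
      ((summable_geometric_of_lt_one (norm_nonneg _) hx).mul_left ‖(cc c p : ℂ)‖)
    show ‖(cc c p : ℂ) * (X q y Q p) ^ (k + 1) / ((k : ℂ) + 1)‖ ≤ _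
    rw [aux_norm_term]
    calc ‖(cc c p : ℂ)‖ * ‖X q y Q p‖ ^ (k + 1) / ((k : ℝ) + 1)
        ≤ ‖(cc c p : ℂ)‖ * ‖X q y Q p‖ ^ (k + 1) :=
          div_le_self (by positivity) (le_add_of_nonneg_left (Nat.cast_nonneg k))
      _ ≤ ‖(cc c p : ℂ)‖ * ‖X q y Q p‖ ^ k := by
          exact mul_le_mul_of_nonneg_left
            (pow_le_pow_of_le_one (norm_nonneg _) hx.le (Nat.le_succ k)) (norm_nonneg _)

private lemma summable_Fs (hc : (Function.support c).Finite) (hQ : ‖Q‖ < 1) :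
    Summable (fun p : ℕ × ℕ × ℤ => ∑' k : ℕ, ‖g c q y Q (k, p)‖) := by
  classical
  set N : ℕ := hc.toFinset.sup (fun a => a.1) with hN
  set L : Finset ℤ := (hc.toFinset.filter fun a => a.1 = 0).image Prod.snd with hL
  set Tf : Finset (ℕ × ℕ × ℤ) :=
    (Finset.range (N + 1)) ×ˢ (Finset.range (N + 1)) ×ˢ (hc.toFinset.image Prod.snd) with hT
  set E : ℤ → ℝ := fun l => ‖(c (0, l) : ℂ)‖ * (1 - ‖Q * y ^ l‖)⁻¹ with hE
  have hr0 : ∀ l : ℤ, c (0, l) ≠ 0 → ‖Q * y ^ l‖ < 1 := by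
    intro l h
    have h2 := hsmall 1 0 l le_rfl (by simpa using h)
    simpa using h2
  have hLc : ∀ l ∈ L, c (0, l) ≠ 0 := by
    intro l hl
    rw [hL] at hl
    obtain ⟨⟨a1, a2⟩, ha, h2⟩ := Finset.mem_image.1 hl
    obtain ⟨ha1, ha2⟩ := Finset.mem_filter.1 ha
    simp only at h2 ha2
    subst h2; subst ha2
    exact hc.mem_toFinset.1 ha1
  have hEnn : ∀ l ∈ L, 0 ≤ E l := by
    intro l hl
    rw [hE]
    exact mul_nonneg (norm_nonneg _)
      (inv_nonneg.2 (sub_nonneg.2 (hr0 l (hLc l hl)).le))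
  have hmemT : ∀ p : ℕ × ℕ × ℤ, p.2.1 ≠ 0 → cc c p ≠ 0 → p ∈ Tf := by
    intro p hm h
    have hmem : ((p.1 + 1) * p.2.1, p.2.2) ∈ hc.toFinset := hc.mem_toFinset.2 h
    have hle : (p.1 + 1) * p.2.1 ≤ N := Finset.le_sup (f := fun a : ℕ × ℤ => a.1) hmem
    rw [hT]
    refine Finset.mem_product.2 ⟨Finset.mem_range.2 ?_, Finset.mem_product.2
      ⟨Finset.mem_range.2 ?_, Finset.mem_image.2 ⟨_, hmem, rfl⟩⟩⟩
    · have : p.1 + 1 ≤ (p.1 + 1) * p.2.1 :=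
        Nat.le_mul_of_pos_right _ (Nat.pos_of_ne_zero hm)
      omega
    · have : p.2.1 ≤ (p.1 + 1) * p.2.1 := Nat.le_mul_of_pos_left _ (Nat.succ_pos p.1)
      omega
  have hsumnn : ∀ p : ℕ × ℕ × ℤ,
      0 ≤ ∑ l ∈ L, (if p.2.1 = 0 ∧ p.2.2 = l then E l * ‖Q‖ ^ p.1 else 0) := by
    intro p
    refine Finset.sum_nonneg fun l hl => ?_
    by_cases h : p.2.1 = 0 ∧ p.2.2 = l
    · rw [if_pos h]
      exact mul_nonneg (hEnn l hl) (pow_nonneg (norm_nonneg Q) _)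
    · rw [if_neg h]
  have hFsnn : ∀ p : ℕ × ℕ × ℤ, 0 ≤ ∑' k : ℕ, ‖g c q y Q (k, p)‖ :=
    fun p => tsum_nonneg fun k => norm_nonneg _
  -- summability of the dominating function
  have hH1 : Summable (fun p : ℕ × ℕ × ℤ =>
      if p ∈ Tf then (∑' k : ℕ, ‖g c q y Q (k, p)‖) else 0) := by
    apply summable_of_finite_support
    apply Tf.finite_toSet.subset
    intro p hp
    rw [Function.mem_support] at hp
    by_contra h
    exact hp (if_neg h)
  have hH2 : ∀ l ∈ L, Summable (fun p : ℕ × ℕ × ℤ =>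
      if p.2.1 = 0 ∧ p.2.2 = l then E l * ‖Q‖ ^ p.1 else 0) := by
    intro l _
    have hinj : Function.Injective (fun n : ℕ => ((n, 0, l) : ℕ × ℕ × ℤ)) := by
      intro a b h2
      exact (Prod.ext_iff.1 h2).1
    refine (hinj.summable_iff ?_).1 ?_
    · rintro ⟨n, m, l'⟩ hp
      by_cases h : m = 0 ∧ l' = l
      · exfalso
        obtain ⟨rfl, rfl⟩ := h
        exact hp ⟨n, rfl⟩
      · exact if_neg h
    · refine ((summable_geometric_of_lt_one (norm_nonneg Q) hQ).mul_left
        (E l)).congr fun n => ?_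
      simp
  refine Summable.of_nonneg_of_le hFsnn ?_ (hH1.add (summable_sum hH2))
  intro p
  by_cases hTp : p ∈ Tf
  · rw [if_pos hTp]
    exact le_add_of_nonneg_right (hsumnn p)
  · by_cases h0 : cc c p = 0
    · have hz : (∑' k : ℕ, ‖g c q y Q (k, p)‖) = 0 := by
        have : (fun k : ℕ => ‖g c q y Q (k, p)‖) = fun _ => 0 := by
          funext k; simp [g, h0]
        rw [this, tsum_zero]
      rw [hz, if_neg hTp, zero_add]
      exact hsumnn p
    · have hm : p.2.1 = 0 := by
        by_contra hm
        exact hTp (hmemT p hm h0)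
      obtain ⟨n, m, l⟩ := p
      simp only at hm
      subst hm
      have hc0 : c (0, l) ≠ 0 := by
        have : cc c (n, 0, l) = c (0, l) := by simp [cc]
        rwa [this] at h0
      have hr : ‖Q * y ^ l‖ < 1 := hr0 l hc0
      have hrnn : 0 ≤ ‖Q * y ^ l‖ := norm_nonneg _
      have hlL : l ∈ L := by
        rw [hL]
        exact Finset.mem_image.2 ⟨(0, l),
          Finset.mem_filter.2 ⟨hc.mem_toFinset.2 hc0, rfl⟩, rfl⟩
      have hQn : ‖Q‖ ^ n ≤ 1 := pow_le_one₀ (norm_nonneg Q) hQ.le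
      have hQnn : (0:ℝ) ≤ ‖Q‖ ^ n := pow_nonneg (norm_nonneg Q) n
      have habs : ‖Q ^ (n + 1) * y ^ l‖
          = ‖Q‖ ^ n * ‖Q * y ^ l‖ := by
        rw [norm_mul, norm_mul, norm_pow, pow_succ]
        ring
      have hAnn : 0 ≤ ‖Q ^ (n + 1) * y ^ l‖ := norm_nonneg _
      have hA1 : ‖Q ^ (n + 1) * y ^ l‖ ≤ ‖Q‖ ^ n := by
        rw [habs]
        calc ‖Q‖ ^ n * ‖Q * y ^ l‖
            ≤ ‖Q‖ ^ n * 1 := mul_le_mul_of_nonneg_left hr.le hQnn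
          _ = ‖Q‖ ^ n := mul_one _
      have hA2 : ‖Q ^ (n + 1) * y ^ l‖ ≤ ‖Q * y ^ l‖ := by
        rw [habs]
        calc ‖Q‖ ^ n * ‖Q * y ^ l‖
            ≤ 1 * ‖Q * y ^ l‖ := mul_le_mul_of_nonneg_right hQn hrnn
          _ = ‖Q * y ^ l‖ := one_mul _
      have hgk : ∀ k : ℕ, ‖g c q y Q (k, (n, 0, l))‖
          = ‖(c (0, l) : ℂ)‖ * ‖Q ^ (n + 1) * y ^ l‖ ^ (k + 1) / ((k : ℝ) + 1) := by
        intro k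
        have h2 : g c q y Q (k, (n, 0, l))
            = (c (0, l) : ℂ) * (Q ^ (n + 1) * y ^ l) ^ (k + 1) / ((k : ℂ) + 1) := by
          simp [g, cc, X]
        rw [h2, aux_norm_term]
      have hbound : ∀ k : ℕ, ‖g c q y Q (k, (n, 0, l))‖
          ≤ (‖(c (0, l) : ℂ)‖ * ‖Q‖ ^ n) * ‖Q * y ^ l‖ ^ k := by
        intro k
        rw [hgk k]
        calc ‖(c (0, l) : ℂ)‖ * ‖Q ^ (n + 1) * y ^ l‖ ^ (k + 1) / ((k : ℝ) + 1)
            ≤ ‖(c (0, l) : ℂ)‖ * ‖Q ^ (n + 1) * y ^ l‖ ^ (k + 1) :=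
              div_le_self (by positivity) (le_add_of_nonneg_left (Nat.cast_nonneg k))
          _ = ‖(c (0, l) : ℂ)‖ * (‖Q ^ (n + 1) * y ^ l‖
                * ‖Q ^ (n + 1) * y ^ l‖ ^ k) := by rw [pow_succ']
          _ ≤ ‖(c (0, l) : ℂ)‖ * (‖Q‖ ^ n * ‖Q * y ^ l‖ ^ k) := by
              refine mul_le_mul_of_nonneg_left ?_ (norm_nonneg _)
              exact mul_le_mul hA1 (pow_le_pow_left₀ hAnn hA2 k)
                (pow_nonneg hAnn k) hQnn
          _ = (‖(c (0, l) : ℂ)‖ * ‖Q‖ ^ n) * ‖Q * y ^ l‖ ^ k := by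
              ring
      have hgeo : Summable (fun k : ℕ =>
          (‖(c (0, l) : ℂ)‖ * ‖Q‖ ^ n) * ‖Q * y ^ l‖ ^ k) :=
        (summable_geometric_of_lt_one hrnn hr).mul_left _
      have hkey : (∑' k : ℕ, ‖g c q y Q (k, (n, 0, l))‖) ≤ E l * ‖Q‖ ^ n := by
        calc (∑' k : ℕ, ‖g c q y Q (k, (n, 0, l))‖)
            ≤ ∑' k : ℕ, (‖(c (0, l) : ℂ)‖ * ‖Q‖ ^ n) * ‖Q * y ^ l‖ ^ k :=
              Summable.tsum_le_tsum hbound (fiber_summable_norm hsmall _) hgeo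
          _ = (‖(c (0, l) : ℂ)‖ * ‖Q‖ ^ n) * (1 - ‖Q * y ^ l‖)⁻¹ := by
              rw [tsum_mul_left, tsum_geometric_of_lt_one hrnn hr]
          _ = E l * ‖Q‖ ^ n := by rw [hE]; ring
      have hsingle : E l * ‖Q‖ ^ n
          ≤ ∑ l' ∈ L, (if ((n, 0, l) : ℕ × ℕ × ℤ).2.1 = 0 ∧ ((n, 0, l) : ℕ × ℕ × ℤ).2.2 = l'
              then E l' * ‖Q‖ ^ n else 0) := by
        have h2 := Finset.single_le_sum (f := fun l' : ℤ =>
          (if ((n, 0, l) : ℕ × ℕ × ℤ).2.1 = 0 ∧ ((n, 0, l) : ℕ × ℕ × ℤ).2.2 = l'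
            then E l' * ‖Q‖ ^ n else 0)) (fun l' hl' => ?_) hlL
        · simpa using h2
        · dsimp only
          split
          · exact mul_nonneg (hEnn l' hl') hQnn
          · exact le_rfl
      calc (∑' k : ℕ, ‖g c q y Q (k, (n, 0, l))‖)
          ≤ E l * ‖Q‖ ^ n := hkey
        _ ≤ _ := by
            rw [if_neg hTp, zero_add]
            exact hsingle

private lemma key (hc : (Function.support c).Finite) (hQ : ‖Q‖ < 1) :
    Multipliable (fun p : ℕ × ℕ × ℤ => (1 - X q y Q p) ^ (-(cc c p))) ∧
    Summable (g c q y Q) ∧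
    (∏' p : ℕ × ℕ × ℤ, (1 - X q y Q p) ^ (-(cc c p)))
      = Complex.exp (∑' z : ℕ × ℕ × ℕ × ℤ, g c q y Q z) := by
  have hgnorm : Summable (fun z : ℕ × ℕ × ℕ × ℤ => ‖g c q y Q z‖) := by
    have h1 : Summable (fun w : (ℕ × ℕ × ℤ) × ℕ => ‖g c q y Q (w.2, w.1)‖) :=
      (summable_prod_of_nonneg (fun w => norm_nonneg _)).2
        ⟨fun p => fiber_summable_norm hsmall p, summable_Fs hsmall hc hQ⟩
    have h2 := (Equiv.prodComm ℕ (ℕ × ℕ × ℤ)).summable_iff.2 h1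
    exact h2.congr fun z => rfl
  have hg : Summable (g c q y Q) := hgnorm.of_norm
  have hgsym : Summable (fun w : (ℕ × ℕ × ℤ) × ℕ => g c q y Q (w.2, w.1)) := hg.prod_symm
  have ht : Summable (t c q y Q) := by
    have h3 : Summable (fun p : ℕ × ℕ × ℤ => ∑' k : ℕ, g c q y Q (k, p)) := hgsym.prod
    exact h3.congr fun p => (fiber_hasSum hsmall p).tsum_eq
  have hexp : (fun p : ℕ × ℕ × ℤ => Complex.exp (t c q y Q p))
      = fun p : ℕ × ℕ × ℤ => (1 - X q y Q p) ^ (-(cc c p)) := by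
    funext p
    by_cases h : cc c p = 0
    · rw [show t c q y Q p = -((cc c p : ℤ) : ℂ) * Complex.log (1 - X q y Q p) from rfl, h]
      simp
    · have hx := hxlt hsmall p h
      have hne : 1 - X q y Q p ≠ 0 := by
        intro h2
        rw [sub_eq_zero] at h2
        rw [← h2] at hx
        simp at hx
      have h5 : t c q y Q p = ((-(cc c p) : ℤ) : ℂ) * Complex.log (1 - X q y Q p) := by
        rw [show t c q y Q p = -((cc c p : ℤ) : ℂ) * Complex.log (1 - X q y Q p) from rfl]
        push_cast
        ring
      rw [h5, Complex.exp_int_mul, Complex.exp_log hne]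
  have hprod : HasProd (fun p : ℕ × ℕ × ℤ => (1 - X q y Q p) ^ (-(cc c p)))
      (Complex.exp (∑' p : ℕ × ℕ × ℤ, t c q y Q p)) := by
    have h6 := ht.hasSum.cexp
    rw [show (cexp ∘ t c q y Q) = fun p : ℕ × ℕ × ℤ => Complex.exp (t c q y Q p) from rfl,
      hexp] at h6
    exact h6
  have hts : (∑' p : ℕ × ℕ × ℤ, t c q y Q p) = ∑' z : ℕ × ℕ × ℕ × ℤ, g c q y Q z := by
    calc (∑' p : ℕ × ℕ × ℤ, t c q y Q p)
        = ∑' (p : ℕ × ℕ × ℤ) (k : ℕ), g c q y Q (k, p) :=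
          tsum_congr fun p => ((fiber_hasSum hsmall p).tsum_eq).symm
      _ = ∑' w : (ℕ × ℕ × ℤ) × ℕ, g c q y Q (w.2, w.1) := (Summable.tsum_prod hgsym).symm
      _ = ∑' z : ℕ × ℕ × ℕ × ℤ, g c q y Q z :=
          (Equiv.prodComm (ℕ × ℕ × ℤ) ℕ).tsum_eq (g c q y Q)
  exact ⟨hprod.multipliable, hg, by rw [hprod.tprod_eq, hts]⟩

end

end SQEG

/-- Second-quantization identity for symmetric-product elliptic genera: for a finitely
supported `c : ℕ × ℤ → ℤ` and `|q| < 1`, `y ≠ 0`, `|Q| < 1` with `|Qⁿ q^m y^l| < 1`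
whenever `n ≥ 1` and `c(nm, l) ≠ 0`, one has
`∏_{n≥1,m≥0,l} (1 - Qⁿ q^m y^l)^{-c(nm,l)}
  = exp(∑_{k≥1} (1/k) ∑_{n≥1,m≥0,l} c(nm,l)(Qⁿ q^m y^l)^k)`,
products and series converging absolutely. -/
theorem stmt_12 (c : ℕ × ℤ → ℤ) (hc : (Function.support c).Finite)
    (q y Q : ℂ) (hq : ‖q‖ < 1) (hy : y ≠ 0) (hQ : ‖Q‖ < 1)
    (hsmall : ∀ (n m : ℕ) (l : ℤ), 1 ≤ n → c (n * m, l) ≠ 0 →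
      ‖Q ^ n * q ^ m * y ^ l‖ < 1) :
    Multipliable (fun p : ℕ × ℕ × ℤ =>
      (1 - Q ^ (p.1 + 1) * q ^ p.2.1 * y ^ p.2.2) ^ (-(c ((p.1 + 1) * p.2.1, p.2.2)))) ∧
    Summable (fun z : ℕ × ℕ × ℕ × ℤ =>
      (c ((z.2.1 + 1) * z.2.2.1, z.2.2.2) : ℂ) *
        (Q ^ (z.2.1 + 1) * q ^ z.2.2.1 * y ^ z.2.2.2) ^ (z.1 + 1) / ((z.1 : ℂ) + 1)) ∧
    (∏' p : ℕ × ℕ × ℤ,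
        (1 - Q ^ (p.1 + 1) * q ^ p.2.1 * y ^ p.2.2) ^ (-(c ((p.1 + 1) * p.2.1, p.2.2))))
      = Complex.exp (∑' z : ℕ × ℕ × ℕ × ℤ,
          (c ((z.2.1 + 1) * z.2.2.1, z.2.2.2) : ℂ) *
            (Q ^ (z.2.1 + 1) * q ^ z.2.2.1 * y ^ z.2.2.2) ^ (z.1 + 1) / ((z.1 : ℂ) + 1)) := by
  exact SQEG.key hsmall hc hQ
end
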